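/- arXiv:1805.07392 — 10 statements merged into one kernel-verified Lean document; each statement's English description precedes it below -/
import Mathlib

section
/- Let G = (V ∪ U, E) be a bipartite graph in which every vertex has degree at least r. Then the minimum size of a dynamo for the reversible r-bootstrap percolation process on G is at least twice the minimum size of a dynamo for the (irreversible) r-bootstrap percolation process on G. -/
/-- One round of reversible r-bootstrap percolation: a vertex is active in the next
round iff it has at least `r` active neighbors. -/
def revStep {V : Type*} (G : SimpleGraph V) (r : ℕ) (A : Set V) : Set V :=
  {v | r ≤ (G.neighborSet v ∩ A).ncard}

/-- One round of (irreversible) r-bootstrap percolation: active vertices stay active,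
and an inactive vertex becomes active iff it has at least `r` active neighbors. -/
def bpStep {V : Type*} (G : SimpleGraph V) (r : ℕ) (A : Set V) : Set V :=
  A ∪ revStep G r A

/-- A dynamo for reversible r-BP: from some time on, all vertices are active. -/
def revDynamo {V : Type*} (G : SimpleGraph V) (r : ℕ) (A : Set V) : Prop :=
  ∃ t, ∀ t' ≥ t, (revStep G r)^[t'] A = Set.univ

/-- A dynamo for r-BP: eventually all vertices are active (and stay so, by monotonicity). -/
def bpDynamo {V : Type*} (G : SimpleGraph V) (r : ℕ) (A : Set V) : Prop :=
  ∃ t, ∀ t' ≥ t, (bpStep G r)^[t'] A = Set.univ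

section Aux
variable {V : Type*} [Fintype V] (G : SimpleGraph V) (r : ℕ)

lemma revStep_mono {A B : Set V} (h : A ⊆ B) : revStep G r A ⊆ revStep G r B := by
  intro v hv
  exact le_trans hv (Set.ncard_le_ncard (Set.inter_subset_inter_right _ h) (Set.toFinite _))

lemma rev_subset_bp (A : Set V) (t : ℕ) : (revStep G r)^[t] A ⊆ (bpStep G r)^[t] A := by
  induction t with
  | zero => exact subset_rfl
  | succ t ih =>
    rw [Function.iterate_succ_apply', Function.iterate_succ_apply']
    exact (revStep_mono G r ih).trans Set.subset_union_right

lemma bp_mono_time (A : Set V) : Monotone (fun t => (bpStep G r)^[t] A) := by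
  apply monotone_nat_of_le_succ
  intro t
  rw [Function.iterate_succ_apply']
  exact Set.subset_union_left

lemma revStep_univ (hdeg : ∀ v, r ≤ (G.neighborSet v).ncard) :
    revStep G r (Set.univ : Set V) = Set.univ := by
  ext v
  simp only [revStep, Set.mem_setOf_eq, Set.inter_univ, Set.mem_univ, iff_true]
  exact hdeg v

lemma revStep_side (c : V → Bool) (hbip : ∀ u v, G.Adj u v → c u ≠ c v) (hr : 1 ≤ r)
    (X : Set V) (b : Bool) :
    revStep G r (X ∩ {v | c v = b}) = revStep G r X ∩ {v | c v = !b} := by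
  ext v
  by_cases hv : c v = b
  · have hempty : G.neighborSet v ∩ (X ∩ {v | c v = b}) = ∅ := by
      ext u
      simp only [Set.mem_inter_iff, Set.mem_setOf_eq, Set.mem_empty_iff_false, iff_false]
      rintro ⟨hu, _, hub⟩
      exact hbip v u hu (hv.trans hub.symm)
    simp only [revStep, Set.mem_setOf_eq, Set.mem_inter_iff, hempty, Set.ncard_empty]
    constructor
    · intro h; omega
    · rintro ⟨-, h⟩
      rw [hv] at h
      exact absurd h (by simp)
  · have hv' : c v = !b := by cases b <;> simp_all
    have heq : G.neighborSet v ∩ (X ∩ {v | c v = b}) = G.neighborSet v ∩ X := by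
      ext u
      simp only [Set.mem_inter_iff, Set.mem_setOf_eq, and_congr_right_iff]
      intro hu
      constructor
      · rintro ⟨h, -⟩; exact h
      · intro h
        refine ⟨h, ?_⟩
        have := hbip v u hu
        rw [hv'] at this
        cases b <;> simp_all
    simp only [revStep, Set.mem_setOf_eq, Set.mem_inter_iff, heq, hv', and_true]

lemma rev_iter_side (c : V → Bool) (hbip : ∀ u v, G.Adj u v → c u ≠ c v) (hr : 1 ≤ r)
    (A : Set V) (b : Bool) (t : ℕ) :
    ∃ b', (revStep G r)^[t] (A ∩ {v | c v = b}) = (revStep G r)^[t] A ∩ {v | c v = b'} := by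
  induction t with
  | zero => exact ⟨b, rfl⟩
  | succ t ih =>
    obtain ⟨b', hb'⟩ := ih
    refine ⟨!b', ?_⟩
    rw [Function.iterate_succ_apply', Function.iterate_succ_apply', hb',
      revStep_side G r c hbip hr]

lemma side_bpDynamo (c : V → Bool) (hbip : ∀ u v, G.Adj u v → c u ≠ c v) (hr : 1 ≤ r)
    (A : Set V) (hA : revDynamo G r A) (b : Bool) : bpDynamo G r (A ∩ {v | c v = b}) := by
  obtain ⟨t, ht⟩ := hA
  refine ⟨t + 1, fun t' ht' => ?_⟩
  obtain ⟨b', hb'⟩ := rev_iter_side G r c hbip hr A b t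
  have h1 : (revStep G r)^[t] (A ∩ {v | c v = b}) = {v | c v = b'} := by
    rw [hb', ht t le_rfl, Set.univ_inter]
  have h2 : (revStep G r)^[t + 1] (A ∩ {v | c v = b}) = {v | c v = !b'} := by
    rw [Function.iterate_succ_apply', h1,
      show ({v | c v = b'} : Set V) = Set.univ ∩ {v | c v = b'} from (Set.univ_inter _).symm,
      revStep_side G r c hbip hr]
    have : revStep G r (Set.univ : Set V) = Set.univ := by
      have := ht (t + 1) (Nat.le_succ t)
      rw [Function.iterate_succ_apply', ht t le_rfl] at this
      exact this
    rw [this, Set.univ_inter]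
  have key : (bpStep G r)^[t + 1] (A ∩ {v | c v = b}) = Set.univ := by
    apply Set.eq_univ_of_univ_subset
    intro v _
    by_cases hv : c v = b'
    · have hm : v ∈ (revStep G r)^[t] (A ∩ {v | c v = b}) := by rw [h1]; exact hv
      exact bp_mono_time G r _ (Nat.le_succ t) (rev_subset_bp G r _ t hm)
    · have hv' : c v = !b' := by cases b' <;> simp_all
      have hm : v ∈ (revStep G r)^[t + 1] (A ∩ {v | c v = b}) := by rw [h2]; exact hv'
      exact rev_subset_bp G r _ (t + 1) hm
  exact Set.eq_univ_of_univ_subset (key ▸ bp_mono_time G r _ ht')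

end Aux

/-- For a bipartite graph `G` of minimum degree at least `r`, the minimum
size of a reversible r-BP dynamo is at least twice the minimum size of an r-BP dynamo. -/
theorem stmt_0 {V : Type*} [Fintype V] (G : SimpleGraph V) (r : ℕ)
    (c : V → Bool) (hbip : ∀ u v, G.Adj u v → c u ≠ c v)
    (hdeg : ∀ v, r ≤ (G.neighborSet v).ncard) :
    2 * sInf {n | ∃ A : Set V, bpDynamo G r A ∧ A.ncard = n} ≤
      sInf {n | ∃ A : Set V, revDynamo G r A ∧ A.ncard = n} := by
  rcases Nat.eq_zero_or_pos r with hr | hr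
  · -- r = 0 : the empty set is a bp dynamo, so the left side is 0.
    have h0 : (0 : ℕ) ∈ {n | ∃ A : Set V, bpDynamo G r A ∧ A.ncard = n} := by
      refine ⟨∅, ⟨1, fun t' ht' => ?_⟩, Set.ncard_empty V⟩
      obtain ⟨s, rfl⟩ := Nat.exists_eq_add_of_le ht'
      have huniv : ∀ s, (bpStep G r)^[1 + s] (∅ : Set V) = Set.univ := by
        intro s
        induction s with
        | zero =>
          apply Set.eq_univ_of_univ_subset
          intro v _
          right
          simp [revStep, hr]
        | succ s ih =>
          rw [show 1 + (s + 1) = (1 + s) + 1 from by ring, Function.iterate_succ_apply', ih]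
          exact Set.eq_univ_of_univ_subset Set.subset_union_left
      exact huniv s
    have := Nat.sInf_le h0
    omega
  · -- r ≥ 1
    have huniv : revDynamo G r (Set.univ : Set V) := by
      refine ⟨0, fun t' _ => ?_⟩
      induction t' with
      | zero => rfl
      | succ t ih => rw [Function.iterate_succ_apply', ih (Nat.zero_le t)]; exact revStep_univ G r hdeg
    have hne : {n | ∃ A : Set V, revDynamo G r A ∧ A.ncard = n}.Nonempty :=
      ⟨_, Set.univ, huniv, rfl⟩
    obtain ⟨A, hA, hcard⟩ := Nat.sInf_mem hne
    have hb : ∀ b, sInf {n | ∃ A : Set V, bpDynamo G r A ∧ A.ncard = n} ≤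
        (A ∩ {v | c v = b}).ncard := fun b =>
      Nat.sInf_le ⟨A ∩ {v | c v = b}, side_bpDynamo G r c hbip hr A hA b, rfl⟩
    have hsplit : (A ∩ {v | c v = false}).ncard + (A ∩ {v | c v = true}).ncard = A.ncard := by
      rw [← Set.ncard_union_eq ?_ (Set.toFinite _) (Set.toFinite _)]
      · congr 1
        ext v
        simp only [Set.mem_union, Set.mem_inter_iff, Set.mem_setOf_eq]
        cases h : c v <;> simp [h]
      · exact Set.disjoint_left.mpr (by rintro v ⟨-, h0⟩ ⟨-, h1⟩; simp_all)
    have := hb false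
    have := hb true
    omega
end

section
/- Let G be a Δ-regular graph and r ≤ Δ. If ω is a monotone dynamo for reversible r-bootstrap percolation on G, then the number of active vertices in ω is at least 2(1 − Δ/(2r))·|V(G)| (equivalently, at least ((2r − Δ)/r)·|V(G)|). -/
/-- A monotone dynamo for reversible r-BP. -/
def revMonotoneDynamo {V : Type*} (G : SimpleGraph V) (r : ℕ) (A : Set V) : Prop :=
  revDynamo G r A ∧ ∀ t, (revStep G r)^[t] A ⊆ (revStep G r)^[t + 1] A

/-- In a `Δ`-regular graph with `r ≤ Δ`, any monotone dynamo `A` for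
reversible r-BP satisfies `(2r - Δ) * |V| ≤ r * |A|`, i.e. `|A| ≥ 2(1 - Δ/(2r)) * |V|`. -/
theorem stmt_1 {V : Type*} [Fintype V] (G : SimpleGraph V) (Δ r : ℕ)
    (hreg : ∀ v, (G.neighborSet v).ncard = Δ) (hr : r ≤ Δ)
    (A : Set V) (hA : revMonotoneDynamo G r A) :
    ((2 * r : ℤ) - Δ) * Fintype.card V ≤ (r : ℤ) * A.ncard := by
  classical
  obtain ⟨hdyn, hmono⟩ := hA
  set F := revStep G r with hF
  -- everyone activates eventually
  have hex : ∀ v : V, ∃ s, v ∈ F^[s] A := by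
    obtain ⟨t0, ht0⟩ := hdyn
    intro v
    exact ⟨t0, by rw [ht0 t0 le_rfl]; trivial⟩
  set t : V → ℕ := fun v => Nat.find (hex v) with ht
  have tmem : ∀ v, v ∈ F^[t v] A := fun v => Nat.find_spec (hex v)
  have tle : ∀ v s, v ∈ F^[s] A → t v ≤ s := fun v s h => Nat.find_le h
  have tzero : ∀ v, t v = 0 ↔ v ∈ A := by
    intro v
    constructor
    · intro h
      have := tmem v
      rwa [h, Function.iterate_zero_apply] at this
    · intro h
      exact Nat.le_zero.mp (tle v 0 (by simpa using h))
  -- neighbor finsets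
  set N : V → Finset V := fun v => (G.neighborSet v).toFinset with hN
  have hNcard : ∀ v, (N v).card = Δ := by
    intro v
    rw [hN]
    rw [← Set.ncard_eq_toFinset_card']
    exact hreg v
  -- converting set-intersection cards to filter cards
  have hconv : ∀ (v : V) (p : V → Prop) [DecidablePred p],
      (G.neighborSet v ∩ {u | p u}).ncard = ((N v).filter p).card := by
    intro v p hp
    rw [Set.ncard_eq_toFinset_card']
    congr 1
    ext u
    simp [hN]
  -- key 1 : vertices of A have r neighbors with t = 0
  have key1 : ∀ v ∈ A, r ≤ ((N v).filter (fun u => t u = 0)).card := by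
    intro v hv
    have h1 : v ∈ F A := by
      have := hmono 0 (by simpa using hv)
      simpa using this
    have h2 : r ≤ (G.neighborSet v ∩ A).ncard := h1
    have hAeq : A = {u | t u = 0} := by
      ext u; simp [tzero u]
    rw [hAeq] at h2
    rwa [hconv] at h2
  -- key 2 : vertices outside A have r neighbors activated strictly earlier
  have key2 : ∀ v ∉ A, r ≤ ((N v).filter (fun u => t u < t v)).card := by
    intro v hv
    have hne : t v ≠ 0 := fun h => hv ((tzero v).mp h)
    obtain ⟨s, hs⟩ := Nat.exists_eq_succ_of_ne_zero hne
    have h1 : v ∈ F (F^[s] A) := by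
      have := tmem v
      rwa [hs, Function.iterate_succ_apply'] at this
    have h2 : r ≤ (G.neighborSet v ∩ F^[s] A).ncard := h1
    have hsub : G.neighborSet v ∩ F^[s] A ⊆ G.neighborSet v ∩ {u | t u < t v} := by
      intro u hu
      refine ⟨hu.1, ?_⟩
      have := tle u s hu.2
      simp only [Set.mem_setOf_eq]
      omega
    have h3 : r ≤ (G.neighborSet v ∩ {u | t u < t v}).ncard :=
      h2.trans (Set.ncard_le_ncard hsub (Set.toFinite _))
    rwa [hconv] at h3
  -- the three counting functions
  set g1 : V → ℕ := fun v => if t v = 0 then ((N v).filter (fun u => t u = 0)).card else 0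
    with hg1
  set g2 : V → ℕ := fun v => ((N v).filter (fun u => t u < t v)).card with hg2
  set g2' : V → ℕ := fun v => ((N v).filter (fun u => t v < t u)).card with hg2'
  -- two disjoint predicates bound
  have hsub2 : ∀ (v : V) (p q : V → Prop) [DecidablePred p] [DecidablePred q],
      (∀ u, ¬(p u ∧ q u)) →
      ((N v).filter p).card + ((N v).filter q).card ≤ Δ := by
    intro v p q hp hq hdis
    have hd : Disjoint ((N v).filter p) ((N v).filter q) := by
      rw [Finset.disjoint_left]
      intro u hu1 hu2
      exact hdis u ⟨(Finset.mem_filter.mp hu1).2, (Finset.mem_filter.mp hu2).2⟩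
    calc ((N v).filter p).card + ((N v).filter q).card
        = (((N v).filter p) ∪ ((N v).filter q)).card :=
          (Finset.card_union_of_disjoint hd).symm
      _ ≤ (N v).card := Finset.card_le_card (Finset.union_subset
            (Finset.filter_subset _ _) (Finset.filter_subset _ _))
      _ = Δ := hNcard v
  -- per-vertex bound
  have perv : ∀ v, g1 v + g2 v + g2' v ≤ Δ := by
    intro v
    by_cases h0 : t v = 0
    · have e1 : g1 v = ((N v).filter (fun u => t u = 0)).card := if_pos h0
      have e2 : g2 v = 0 := by
        apply Finset.card_eq_zero.mpr
        rw [Finset.filter_eq_empty_iff]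
        intro u _
        omega
      have e3 : g2' v = ((N v).filter (fun u => t v < t u)).card := rfl
      have h12 : ((N v).filter (fun u => t u = 0)).card
          + ((N v).filter (fun u => t v < t u)).card ≤ Δ :=
        hsub2 v _ _ (by intro u; omega)
      omega
    · have e1 : g1 v = 0 := if_neg h0
      have e2 : g2 v = ((N v).filter (fun u => t u < t v)).card := rfl
      have e3 : g2' v = ((N v).filter (fun u => t v < t u)).card := rfl
      have h12 : ((N v).filter (fun u => t u < t v)).card
          + ((N v).filter (fun u => t v < t u)).card ≤ Δ :=
        hsub2 v _ _ (by intro u; omega)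
      omega
  -- filter-card as a double sum
  have hcard : ∀ (v : V) (p : V → Prop) [DecidablePred p],
      ((N v).filter p).card
        = ∑ u : V, (if G.Adj v u ∧ p u then 1 else 0) := by
    intro v p hp
    have hNv : N v = Finset.univ.filter (fun u => G.Adj v u) := by
      ext u; simp [hN]
    rw [hNv, Finset.card_filter, Finset.sum_filter]
    refine Finset.sum_congr rfl fun u _ => ?_
    by_cases h : G.Adj v u <;> by_cases h' : p u <;> simp [h, h']
  -- swap symmetry
  have swapEq : ∑ v : V, g2 v = ∑ v : V, g2' v := by
    calc ∑ v : V, g2 v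
        = ∑ v : V, ∑ u : V, (if G.Adj v u ∧ t u < t v then 1 else 0) :=
          Finset.sum_congr rfl fun v _ => hcard v _
      _ = ∑ u : V, ∑ v : V, (if G.Adj v u ∧ t u < t v then 1 else 0) := Finset.sum_comm
      _ = ∑ v : V, ∑ u : V, (if G.Adj v u ∧ t v < t u then 1 else 0) := by
          refine Finset.sum_congr rfl fun v _ => Finset.sum_congr rfl fun u _ => ?_
          exact if_congr (by rw [G.adj_comm]) rfl rfl
      _ = ∑ v : V, g2' v :=
          Finset.sum_congr rfl fun v _ => (hcard v _).symm
  -- lower bounds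
  set Af : Finset V := A.toFinset with hAf
  have hAfmem : ∀ v, v ∈ Af ↔ v ∈ A := by intro v; simp [hAf]
  have h1 : r * Af.card ≤ ∑ v : V, g1 v := by
    calc r * Af.card = ∑ _v ∈ Af, r := by rw [Finset.sum_const, smul_eq_mul, mul_comm]
      _ ≤ ∑ v ∈ Af, g1 v := by
          refine Finset.sum_le_sum fun v hv => ?_
          have hvA : v ∈ A := (hAfmem v).mp hv
          have e1 : g1 v = ((N v).filter (fun u => t u = 0)).card :=
            if_pos ((tzero v).mpr hvA)
          rw [e1]
          exact key1 v hvA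
      _ ≤ ∑ v : V, g1 v := Finset.sum_le_sum_of_subset (Finset.subset_univ _)
  have h2 : r * (Fintype.card V - Af.card) ≤ ∑ v : V, g2 v := by
    calc r * (Fintype.card V - Af.card) = ∑ _v ∈ Afᶜ, r := by
          rw [Finset.sum_const, smul_eq_mul, mul_comm, Finset.card_compl]
      _ ≤ ∑ v ∈ Afᶜ, g2 v := by
          refine Finset.sum_le_sum fun v hv => ?_
          have hvA : v ∉ A := fun h => (Finset.mem_compl.mp hv) ((hAfmem v).mpr h)
          exact key2 v hvA
      _ ≤ ∑ v : V, g2 v := Finset.sum_le_sum_of_subset (Finset.subset_univ _)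
  have h3 : (∑ v : V, g1 v) + (∑ v : V, g2 v) + (∑ v : V, g2' v) ≤ Δ * Fintype.card V := by
    calc (∑ v : V, g1 v) + (∑ v : V, g2 v) + (∑ v : V, g2' v)
        = ∑ v : V, (g1 v + g2 v + g2' v) := by
          rw [Finset.sum_add_distrib, Finset.sum_add_distrib]
      _ ≤ ∑ _v : V, Δ := Finset.sum_le_sum fun v _ => perv v
      _ = Δ * Fintype.card V := by
          rw [Finset.sum_const, smul_eq_mul, mul_comm, Finset.card_univ]
  -- assemble
  have hcardle : Af.card ≤ Fintype.card V := Af.card_le_univ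
  have hncard : A.ncard = Af.card := Set.ncard_eq_toFinset_card' A
  have main : r * Af.card + 2 * (r * (Fintype.card V - Af.card)) ≤ Δ * Fintype.card V := by
    omega
  rw [hncard]
  have hZ : (r : ℤ) * Af.card + 2 * ((r : ℤ) * ((Fintype.card V : ℤ) - Af.card))
      ≤ (Δ : ℤ) * Fintype.card V := by
    zify [hcardle] at main
    linarith [main]
  nlinarith [hZ]
end

section
/- Let G be a Δ-regular graph, 1 ≤ r ≤ Δ, and let the vertex set be partitioned into V₀ and V₁ with induced subgraphs G₀ and G₁. If G₀ contains no subgraph of minimum degree at least Δ − r + 1, then the number of edges between V₀ and V₁ satisfies e(V₀, V₁) ≥ (2r − Δ)·|V₀|. -/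
/-- The set of edges of `G` with one endpoint in `V₀` and the other outside `V₀`. -/
def crossEdges {V : Type*} (G : SimpleGraph V) (V₀ : Set V) : Set (Sym2 V) :=
  {e ∈ G.edgeSet | ∃ u v, e = s(u, v) ∧ u ∈ V₀ ∧ v ∉ V₀}

open Finset in
theorem key_lemma {V : Type*} [Fintype V] [DecidableEq V] (G : SimpleGraph V)
    [DecidableRel G.Adj] (Δ r : ℕ) (hr : r ≤ Δ) (V₀ : Set V)
    (hdeg : ∀ S : Set V, S ⊆ V₀ → S.Nonempty →
      ∃ v ∈ S, (G.neighborSet v ∩ S).ncard ≤ Δ - r) :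
    ∀ S : Finset V, ↑S ⊆ V₀ →
      ((2 * r : ℤ) - Δ) * S.card ≤
        ∑ u ∈ S, ((Δ : ℤ) - ((G.neighborFinset u ∩ S).card : ℤ)) := by
  intro S
  induction S using Finset.strongInduction with
  | _ S ih =>
    intro hSV
    rcases S.eq_empty_or_nonempty with rfl | hne
    · simp
    · obtain ⟨v, hvS, hvd⟩ := hdeg ↑S hSV (Finset.coe_nonempty.mpr hne)
      simp only [Finset.mem_coe] at hvS
      have hNS : G.neighborSet v ∩ ↑S = ↑(G.neighborFinset v ∩ S) := by
        rw [Finset.coe_inter, SimpleGraph.neighborFinset_def, Set.coe_toFinset]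
      rw [hNS, Set.ncard_coe_finset] at hvd
      set S' := S.erase v with hS'
      have hins : S = insert v S' := (Finset.insert_erase hvS).symm
      have hvS' : v ∉ S' := Finset.notMem_erase v S
      have hcard : S.card = S'.card + 1 := by
        rw [hins, Finset.card_insert_of_notMem hvS']
      have hsub : S' ⊂ S := Finset.erase_ssubset hvS
      have hSV' : ↑S' ⊆ V₀ := fun x hx => hSV (Finset.mem_coe.mpr (hsub.1 hx))
      have hsplit : ∀ u ∈ S', ((G.neighborFinset u ∩ S).card : ℤ)
          = ((G.neighborFinset u ∩ S').card : ℤ)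
            + (if v ∈ G.neighborFinset u then 1 else 0) := by
        intro u hu
        by_cases hv : v ∈ G.neighborFinset u
        · rw [hins, Finset.inter_insert_of_mem hv,
            Finset.card_insert_of_notMem (by simp [hvS']), if_pos hv]
          push_cast; ring
        · rw [hins, Finset.inter_insert_of_notMem hv, if_neg hv, add_zero]
      have hvv : G.neighborFinset v ∩ S' = G.neighborFinset v ∩ S := by
        rw [hins, Finset.inter_insert_of_notMem (by simp)]
      have hindsum : ∑ u ∈ S', (if v ∈ G.neighborFinset u then (1:ℤ) else 0)
          = ((G.neighborFinset v ∩ S).card : ℤ) := by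
        rw [Finset.sum_boole, ← hvv, Finset.inter_comm]
        congr 2
        ext x
        simp [SimpleGraph.mem_neighborFinset, SimpleGraph.adj_comm]
      have hsum : ∑ u ∈ S, ((Δ : ℤ) - ((G.neighborFinset u ∩ S).card : ℤ))
          = ((Δ : ℤ) - ((G.neighborFinset v ∩ S).card : ℤ))
            + (∑ u ∈ S', ((Δ : ℤ) - ((G.neighborFinset u ∩ S').card : ℤ))
               - ((G.neighborFinset v ∩ S).card : ℤ)) := by
        rw [hins, Finset.sum_insert hvS', ← hins, ← hindsum, ← Finset.sum_sub_distrib]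
        congr 1
        apply Finset.sum_congr rfl
        intro u hu
        rw [hsplit u hu]; ring
      have hih := ih S' hsub hSV'
      have hdle : ((G.neighborFinset v ∩ S).card : ℤ) ≤ (Δ : ℤ) - r := by omega
      rw [hsum, hcard]
      push_cast
      nlinarith [hih, hdle]

/-- In a `Δ`-regular graph with `1 ≤ r ≤ Δ` and a partition of the vertices
into `V₀` and its complement `V₁`, if the subgraph induced on `V₀` contains no subgraph of
minimum degree at least `Δ - r + 1` (i.e. every nonempty subset of `V₀` has a vertex with
at most `Δ - r` neighbors inside it), then `e(V₀, V₁) ≥ (2r - Δ) * |V₀|`. -/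
theorem stmt_2 {V : Type*} [Fintype V] (G : SimpleGraph V) (Δ r : ℕ)
    (hreg : ∀ v, (G.neighborSet v).ncard = Δ) (hr1 : 1 ≤ r) (hr : r ≤ Δ)
    (V₀ : Set V)
    (hdeg : ∀ S : Set V, S ⊆ V₀ → S.Nonempty →
      ∃ v ∈ S, (G.neighborSet v ∩ S).ncard ≤ Δ - r) :
    ((2 * r : ℤ) - Δ) * V₀.ncard ≤ (crossEdges G V₀).ncard := by
  classical
  set W : Finset V := V₀.toFinset with hW
  have hWc : (↑W : Set V) = V₀ := Set.coe_toFinset V₀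
  have hdegF : ∀ u, (G.neighborFinset u).card = Δ := by
    intro u
    have := hreg u
    rwa [SimpleGraph.neighborFinset_def, ← Set.ncard_eq_toFinset_card']
  set F : Finset (Sym2 V) :=
    W.biUnion (fun u => ((G.neighborFinset u) \ W).image (fun w => s(u, w))) with hF
  have hcross : crossEdges G V₀ = ↑F := by
    ext e
    simp only [crossEdges, Set.mem_setOf_eq, hF, Finset.coe_biUnion, Set.mem_iUnion,
      Finset.mem_coe, Finset.mem_image, Finset.mem_sdiff, SimpleGraph.mem_neighborFinset,
      Set.mem_toFinset, hW]
    constructor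
    · rintro ⟨he, u, w, rfl, huV, hwV⟩
      exact ⟨u, huV, w, ⟨(G.mem_edgeSet).mp he, hwV⟩, rfl⟩
    · rintro ⟨u, huV, w, ⟨hadj, hwV⟩, rfl⟩
      exact ⟨(G.mem_edgeSet).mpr hadj, u, w, rfl, huV, hwV⟩
  have hdisj : ∀ u ∈ W, ∀ u' ∈ W, u ≠ u' →
      Disjoint (((G.neighborFinset u) \ W).image (fun w => s(u, w)))
        (((G.neighborFinset u') \ W).image (fun w => s(u', w))) := by
    intro u hu u' hu' hne
    rw [Finset.disjoint_left]
    rintro e he he'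
    obtain ⟨w, hw, rfl⟩ := Finset.mem_image.mp he
    obtain ⟨w', hw', heq⟩ := Finset.mem_image.mp he'
    rw [Sym2.eq_iff] at heq
    rcases heq with ⟨rfl, rfl⟩ | ⟨rfl, rfl⟩
    · exact hne rfl
    · exact (Finset.mem_sdiff.mp hw').2 hu
  have hcardF : F.card = ∑ u ∈ W, ((G.neighborFinset u) \ W).card := by
    rw [hF, Finset.card_biUnion hdisj]
    refine Finset.sum_congr rfl fun u _ => ?_
    apply Finset.card_image_of_injOn
    intro w hw w' hw' heq
    rw [Sym2.eq_iff] at heq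
    rcases heq with ⟨-, h⟩ | ⟨h1, h2⟩
    · exact h
    · exact h2.trans h1
  have hsd : ∀ u, (((G.neighborFinset u) \ W).card : ℤ)
      = (Δ : ℤ) - ((G.neighborFinset u ∩ W).card : ℤ) := by
    intro u
    have h := Finset.card_inter_add_card_sdiff (G.neighborFinset u) W
    rw [hdegF u] at h
    omega
  have hkey := key_lemma G Δ r hr V₀ hdeg W (by rw [hWc])
  have hWcard : V₀.ncard = W.card := Set.ncard_eq_toFinset_card' V₀
  rw [hcross, Set.ncard_coe_finset, hcardF, hWcard]
  calc ((2 * r : ℤ) - Δ) * W.card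
      ≤ ∑ u ∈ W, ((Δ : ℤ) - ((G.neighborFinset u ∩ W).card : ℤ)) := hkey
    _ = ((∑ u ∈ W, ((G.neighborFinset u) \ W).card : ℕ) : ℤ) := by
        push_cast
        exact Finset.sum_congr rfl fun u _ => (hsd u).symm
end

section
/- Let G be a 2d-regular graph. Every monotone dynamo for the majority process on G has at least (1 − d/(d+2))·|V(G)| = (2/(d+2))·|V(G)| active vertices. -/
/-- One round of the majority process on a `2d`-regular graph: a vertex becomes active iff
it has at least `d + 1` active neighbors, or exactly `d` active neighbors and is currently
active (ties keep the current state). -/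
def majStep {V : Type*} (G : SimpleGraph V) (d : ℕ) (A : Set V) : Set V :=
  {v | d + 1 ≤ (G.neighborSet v ∩ A).ncard ∨ ((G.neighborSet v ∩ A).ncard = d ∧ v ∈ A)}

/-- A dynamo for the majority process: from some time on, all vertices are active. -/
def majDynamo {V : Type*} (G : SimpleGraph V) (d : ℕ) (A : Set V) : Prop :=
  ∃ t, ∀ t' ≥ t, (majStep G d)^[t'] A = Set.univ

/-- A monotone dynamo for the majority process. -/
def majMonotoneDynamo {V : Type*} (G : SimpleGraph V) (d : ℕ) (A : Set V) : Prop :=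
  majDynamo G d A ∧ ∀ t, (majStep G d)^[t] A ⊆ (majStep G d)^[t + 1] A

/-!
Along a monotone run consider the potential `Φ(S) = e(S, Sᶜ) + 2|S|`. A vertex activated in
one round had at least `d + 1` neighbours in the previous active set, hence at most `d - 1`
outside the new one: it removes at least `d + 1` edges from the cut and adds at most `d - 1`,
which pays for the `+ 2`, so `Φ` never increases. Initially every active vertex stays active,
so it has at least `d` active neighbours and `Φ(A) ≤ (d + 2)|A|`; finally `Φ(V) = 2|V|`.
-/

open Finset

namespace SimpleGraph

variable {V : Type*} (G : SimpleGraph V) [DecidableRel G.Adj]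

theorem card_interedges_comm (s t : Finset V) :
    #(G.interedges s t) = #(G.interedges t s) :=
  have := G.symm
  Rel.card_interedges_comm s t

variable [Fintype V] [DecidableEq V]

theorem card_interedges_eq_sum (s t : Finset V) :
    #(G.interedges s t) = ∑ v ∈ s, #(G.neighborFinset v ∩ t) := by
  rw [interedges_def, card_filter, sum_product]
  refine sum_congr rfl fun v _ => ?_
  rw [← card_filter]
  congr 1
  ext w
  simp [and_comm]

theorem card_interedges_union_left {s₁ s₂ : Finset V} (h : Disjoint s₁ s₂) (t : Finset V) :
    #(G.interedges (s₁ ∪ s₂) t) = #(G.interedges s₁ t) + #(G.interedges s₂ t) := by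
  simp only [card_interedges_eq_sum, sum_union h]

theorem card_interedges_union_right (s : Finset V) {t₁ t₂ : Finset V} (h : Disjoint t₁ t₂) :
    #(G.interedges s (t₁ ∪ t₂)) = #(G.interedges s t₁) + #(G.interedges s t₂) := by
  simp only [G.card_interedges_comm s, card_interedges_union_left G h]

theorem card_neighborFinset_inter_add_le_degree {t₁ t₂ : Finset V} (h : Disjoint t₁ t₂)
    (v : V) :
    #(G.neighborFinset v ∩ t₁) + #(G.neighborFinset v ∩ t₂) ≤ G.degree v := by
  rw [← card_union_of_disjoint (h.mono inter_subset_right inter_subset_right),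
    ← inter_union_distrib_left, ← card_neighborFinset_eq_degree]
  exact card_le_card inter_subset_left

theorem ncard_neighborSet_inter_coe (v : V) (s : Finset V) :
    (G.neighborSet v ∩ s).ncard = #(G.neighborFinset v ∩ s) := by
  rw [← Set.ncard_coe_finset, coe_inter, coe_neighborFinset]

end SimpleGraph

open SimpleGraph

section MajorityProcess

variable {V : Type*} [Fintype V] [DecidableEq V] {G : SimpleGraph V} [DecidableRel G.Adj] {d : ℕ}

theorem le_card_neighborFinset_inter_of_subset_majStep {s : Finset V}
    (hs : (s : Set V) ⊆ majStep G d s) {v : V} (hv : v ∈ s) :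
    d ≤ #(G.neighborFinset v ∩ s) := by
  have := hs hv
  simp only [majStep, Set.mem_ofPred_eq, ncard_neighborSet_inter_coe] at this
  omega

theorem lt_card_neighborFinset_inter_of_mem_majStep {s : Finset V} {v : V}
    (hv : v ∈ majStep G d s) (hvs : v ∉ s) : d < #(G.neighborFinset v ∩ s) := by
  simp only [majStep, Set.mem_ofPred_eq, ncard_neighborSet_inter_coe, mem_coe] at hv
  tauto

variable (G) in
def cutPotential (s : Finset V) : ℕ := #(G.interedges s sᶜ) + 2 * #s

theorem cutPotential_le_of_subset_majStep (hdeg : ∀ v, G.degree v ≤ 2 * d) {s s' : Finset V}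
    (hss : s ⊆ s') (hs' : (s' : Set V) ⊆ majStep G d s) :
    cutPotential G s' ≤ cutPotential G s := by
  have hcompl : sᶜ = s'ᶜ ∪ (s' \ s) := by
    ext v
    simp only [mem_compl, mem_union, mem_sdiff]
    have := @hss v
    tauto
  have hdisj : Disjoint s'ᶜ (s' \ s) := disjoint_compl_left.mono_right sdiff_subset
  have hcut_s : #(G.interedges s sᶜ) =
      #(G.interedges s s'ᶜ) + #(G.interedges (s' \ s) s) := by
    rw [hcompl, card_interedges_union_right G s hdisj, G.card_interedges_comm s (s' \ s)]
  have hcut_s' : #(G.interedges s' s'ᶜ) =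
      #(G.interedges s s'ᶜ) + #(G.interedges (s' \ s) s'ᶜ) := by
    rw [← card_interedges_union_left G disjoint_sdiff, union_sdiff_of_subset hss]
  have hnew : #(G.interedges (s' \ s) s'ᶜ) + 2 * #(s' \ s) ≤ #(G.interedges (s' \ s) s) := by
    rw [card_interedges_eq_sum, card_interedges_eq_sum, mul_comm, ← smul_eq_mul, ← sum_const,
      ← sum_add_distrib]
    refine sum_le_sum fun v hv => ?_
    obtain ⟨hv', hvs⟩ := mem_sdiff.1 hv
    have hin := lt_card_neighborFinset_inter_of_mem_majStep (hs' hv') hvs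
    have hsplit := G.card_neighborFinset_inter_add_le_degree
      (disjoint_compl_right.mono_left hss : Disjoint s s'ᶜ) v
    have := hdeg v
    omega
  have hcard : #s' = #(s' \ s) + #s := (card_sdiff_add_card_eq_card hss).symm
  unfold cutPotential
  omega

theorem cutPotential_le_mul_card (hdeg : ∀ v, G.degree v ≤ 2 * d) {s : Finset V}
    (hs : (s : Set V) ⊆ majStep G d s) : cutPotential G s ≤ (d + 2) * #s := by
  suffices #(G.interedges s sᶜ) ≤ d * #s by unfold cutPotential; linarith
  rw [card_interedges_eq_sum, mul_comm, ← smul_eq_mul, ← sum_const]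
  refine sum_le_sum fun v hv => ?_
  have hin := le_card_neighborFinset_inter_of_subset_majStep hs hv
  have hsplit := G.card_neighborFinset_inter_add_le_degree (disjoint_compl_right (a := s)) v
  have := hdeg v
  omega

theorem two_mul_card_le_of_majMonotoneDynamo (hdeg : ∀ v, G.degree v ≤ 2 * d) {A : Set V}
    (hA : majMonotoneDynamo G d A) : 2 * Fintype.card V ≤ (d + 2) * A.ncard := by
  classical
  obtain ⟨⟨T, hT⟩, hmono⟩ := hA
  let S : ℕ → Finset V := fun t => ((majStep G d)^[t] A).toFinset
  have hS : ∀ t, (S t : Set V) = (majStep G d)^[t] A := fun t => Set.coe_toFinset _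
  have hS_succ : ∀ t, (S (t + 1) : Set V) = majStep G d (S t) := fun t => by
    rw [hS, hS, Function.iterate_succ_apply']
  have hS_mono : ∀ t, S t ⊆ S (t + 1) := fun t => by
    rw [← coe_subset, hS, hS]
    exact hmono t
  have hanti : Antitone (cutPotential G ∘ S) := antitone_nat_of_succ_le fun t =>
    cutPotential_le_of_subset_majStep hdeg (hS_mono t) (hS_succ t).subset
  have hST : S T = univ := by
    rw [← coe_eq_univ, hS, hT T le_rfl]
  calc 2 * Fintype.card V = cutPotential G (S T) := by
        simp [cutPotential, hST, card_interedges_eq_sum]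
    _ ≤ cutPotential G (S 0) := hanti (Nat.zero_le T)
    _ ≤ (d + 2) * #(S 0) :=
      cutPotential_le_mul_card hdeg (by rw [← hS_succ]; exact coe_subset.2 (hS_mono 0))
    _ = (d + 2) * A.ncard := by rw [Set.ncard_eq_toFinset_card']; rfl

end MajorityProcess

/-- On a `2d`-regular graph, every monotone dynamo `A` for the majority
process satisfies `|A| ≥ (1 - d/(d+2)) * |V| = (2/(d+2)) * |V|`, i.e.
`2 * |V| ≤ (d + 2) * |A|`. -/
theorem stmt_4 {V : Type*} [Fintype V] (G : SimpleGraph V) (d : ℕ)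
    (hreg : ∀ v, (G.neighborSet v).ncard = 2 * d)
    (A : Set V) (hA : majMonotoneDynamo G d A) :
    2 * Fintype.card V ≤ (d + 2) * A.ncard := by
  classical
  refine two_mul_card_le_of_majMonotoneDynamo (fun v => ?_) hA
  rw [← card_neighborFinset_eq_degree, ← hreg v, ← Set.ncard_coe_finset, coe_neighborFinset]
end

section
/- Let d ≥ 2 and 2 ≤ r ≤ d, and consider the d-dimensional torus T_n^d with vertex set [n]^d (coordinates in {1,…,n}, adjacency by differing by 1 mod n in exactly one coordinate). Let K(r) be the set of all (d−r+1)-element increasing tuples of indices from {1,…,d}, and for k ∈ K(r) let T(k) = {x ∈ [n]^d : x_j = 1 for all j ∈ k}, and D(r) = ⋃_{k∈K(r)} T(k). Then every vertex of D(r) has at least 2(r−1) neighbors inside D(r). -/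
/-- The `d`-dimensional torus `T_n^d`: vertices are `d`-tuples of elements of `ZMod n`
(representing coordinates `1, …, n` taken mod `n`), and two vertices are adjacent iff
they differ by `±1 (mod n)` in exactly one coordinate. -/
def torus (n d : ℕ) : SimpleGraph (Fin d → ZMod n) :=
  SimpleGraph.fromRel fun x y =>
    ∃ i, (y i = x i + 1 ∨ y i = x i - 1) ∧ ∀ j, j ≠ i → y j = x j

/-- `D(r)`: the union over all `(d - r + 1)`-element subsets `k` of the coordinate indices
of the sub-tori `T(k) = {x : x_j = 1 for all j ∈ k}`. -/
def dynSet (n d r : ℕ) : Set (Fin d → ZMod n) :=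
  {x | ∃ k : Finset (Fin d), k.card = d - r + 1 ∧ ∀ j ∈ k, x j = 1}

/-!
Write `x ∈ D(r)` as `x ∈ T(k)` with `|k| = d - r + 1`. Moving `x` by `±1` in one of the
`r - 1` coordinates outside `k` keeps it in `T(k)`, and since `1 ≠ -1` in `ZMod n` for
`n ≥ 3` these `2(r - 1)` moves give distinct neighbours of `x`.
-/

open Function Finset

theorem Function.update_add_eq_update_add_iff {ι G : Type*} [DecidableEq ι] [AddGroup G]
    (x : ι → G) {i j : ι} {a b : G} (ha : a ≠ 0) :
    update x i (x i + a) = update x j (x j + b) ↔ i = j ∧ a = b := by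
  refine ⟨fun h => ?_, by rintro ⟨rfl, rfl⟩; rfl⟩
  have hij : i = j := by
    by_contra hne
    have hi := congrFun h i
    rw [update_self, update_of_ne hne, add_eq_left] at hi
    exact ha hi
  subst hij
  simpa using congrFun h i

theorem torus_adj_update_add {n d : ℕ} (x : Fin d → ZMod n) (i : Fin d) {s : ZMod n}
    (hs : s = 1 ∨ s = -1) (hs0 : s ≠ 0) : (torus n d).Adj x (update x i (x i + s)) := by
  refine ⟨fun h => hs0 ?_, Or.inl ⟨i, ?_, fun j hj => update_of_ne hj _ _⟩⟩
  · simpa using (congrFun h i).symm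
  · rcases hs with rfl | rfl <;> simp [sub_eq_add_neg]

/-- The sub-torus `T(k)`. -/
def subtorus {n d : ℕ} (k : Finset (Fin d)) : Set (Fin d → ZMod n) :=
  {x | ∀ j ∈ k, x j = 1}

theorem update_mem_subtorus {n d : ℕ} {k : Finset (Fin d)} {x : Fin d → ZMod n}
    (hx : x ∈ subtorus k) {i : Fin d} (hi : i ∉ k) (v : ZMod n) :
    update x i v ∈ subtorus k := fun j hj => by
  rw [update_of_ne (ne_of_mem_of_not_mem hj hi)]
  exact hx j hj

theorem subtorus_subset_dynSet {n d r : ℕ} {k : Finset (Fin d)} (hk : #k = d - r + 1) :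
    subtorus k ⊆ dynSet n d r := fun _ hx => ⟨k, hk, hx⟩

theorem two_mul_card_compl_le_ncard_neighborSet_inter_subtorus {n d : ℕ} (hn : 3 ≤ n)
    {k : Finset (Fin d)} {x : Fin d → ZMod n} (hx : x ∈ subtorus k) :
    2 * #kᶜ ≤ ((torus n d).neighborSet x ∩ subtorus k).ncard := by
  have : Fact (2 < n) := ⟨hn⟩
  have : Fact (1 < n) := ⟨by omega⟩
  have hne : (1 : ZMod n) ≠ -1 := (CharP.neg_one_ne_one (ZMod n) n).symm
  have hs0 : ∀ s ∈ ({1, -1} : Finset (ZMod n)), s ≠ 0 := by simp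
  let moves : Finset (Fin d × ZMod n) := kᶜ ×ˢ {1, -1}
  let step : Fin d × ZMod n → (Fin d → ZMod n) := fun p => update x p.1 (x p.1 + p.2)
  have hsub : ↑(moves.image step) ⊆ (torus n d).neighborSet x ∩ subtorus k := by
    simp only [coe_image, Set.image_subset_iff]
    rintro ⟨i, s⟩ hp
    obtain ⟨hi, hs⟩ := mem_product.1 hp
    exact ⟨torus_adj_update_add x i (by simpa using hs) (hs0 s hs),
      update_mem_subtorus hx (mem_compl.1 hi) _⟩
  have hinj : Set.InjOn step ↑moves := by
    rintro ⟨i, s⟩ hp ⟨j, t⟩ - h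
    obtain ⟨rfl, rfl⟩ := (update_add_eq_update_add_iff x (hs0 s (mem_product.1 hp).2)).1 h
    rfl
  calc 2 * #kᶜ = #(moves.image step) := by
        rw [card_image_of_injOn hinj, card_product, card_pair hne, mul_comm]
    _ ≤ _ := by
        rw [← Set.ncard_coe_finset]
        exact Set.ncard_le_ncard hsub

theorem stmt_8_general (n d r : ℕ) (hn : 3 ≤ n) (hrd : r ≤ d)
    (x : Fin d → ZMod n) (hx : x ∈ dynSet n d r) :
    2 * (r - 1) ≤ ((torus n d).neighborSet x ∩ dynSet n d r).ncard := by
  have : NeZero n := ⟨by omega⟩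
  obtain ⟨k, hk, hxk⟩ := hx
  have hcompl : #kᶜ = r - 1 := by rw [card_compl, Fintype.card_fin, hk]; omega
  calc 2 * (r - 1) = 2 * #kᶜ := by rw [hcompl]
    _ ≤ ((torus n d).neighborSet x ∩ subtorus k).ncard :=
        two_mul_card_compl_le_ncard_neighborSet_inter_subtorus hn hxk
    _ ≤ _ := Set.ncard_le_ncard
        (Set.inter_subset_inter_right _ (subtorus_subset_dynSet hk))

/-- For `d ≥ 2`, `2 ≤ r ≤ d` and `n ≥ 3`, every vertex of `D(r)` has at
least `2(r - 1)` neighbors inside `D(r)` in the torus `T_n^d`. -/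
theorem stmt_8 (n d r : ℕ) (hn : 3 ≤ n) (hd : 2 ≤ d) (hr2 : 2 ≤ r) (hrd : r ≤ d)
    (x : Fin d → ZMod n) (hx : x ∈ dynSet n d r) :
    2 * (r - 1) ≤ ((torus n d).neighborSet x ∩ dynSet n d r).ncard :=
  stmt_8_general n d r hn hrd x hx
end

section
/- For d ≥ 2, 2 ≤ r ≤ d, and n ≥ 3, the configuration on the d-dimensional torus T_n^d in which exactly the vertices of D(r) = ⋃_{k} {x : x_j = 1 ∀ j ∈ k} (union over all (d−r+1)-subsets k of {1,…,d}) are active is a monotone dynamo for reversible r-bootstrap percolation. -/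
namespace Stmt10

/-- graph distance from `v` to `1` on the `n`-cycle. -/
def wt (n : ℕ) (v : ZMod n) : ℕ := min (v - 1).val (1 - v).val

/-- total weight of a torus vertex. -/
def sig (n d : ℕ) (x : Fin d → ZMod n) : ℕ := ∑ j, wt n (x j)

variable {n d r : ℕ}

lemma one_ne_zero' (hn : 3 ≤ n) : (1 : ZMod n) ≠ 0 := by
  haveI : Fact (1 < n) := ⟨by omega⟩
  exact one_ne_zero

lemma two_ne_zero' (hn : 3 ≤ n) : (2 : ZMod n) ≠ 0 := by
  haveI : NeZero n := ⟨by omega⟩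
  intro h
  have h2 : ((2:ℕ) : ZMod n) = 2 := by push_cast; ring
  have : ((2:ℕ) : ZMod n).val = 0 := by rw [h2, h, ZMod.val_zero]
  rw [ZMod.val_cast_of_lt (by omega)] at this
  omega

lemma card_le_ncard {V : Type*} [Fintype V] {S : Set V} (F : Finset V)
    (h : ∀ y ∈ F, y ∈ S) : F.card ≤ S.ncard := by
  classical
  have hfin : S.Finite := Set.toFinite S
  rw [Set.ncard_eq_toFinset_card _ hfin]
  exact Finset.card_le_card fun y hy => hfin.mem_toFinset.mpr (h y hy)

section WithInstances
variable [NeZero n]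

lemma wt_eq_zero {v : ZMod n} : wt n v = 0 ↔ v = 1 := by
  unfold wt
  rw [Nat.min_eq_zero_iff, ZMod.val_eq_zero, ZMod.val_eq_zero, sub_eq_zero, sub_eq_zero]
  constructor
  · rintro (h | h)
    · exact h
    · exact h.symm
  · intro h; exact Or.inl h

lemma wt_formula (u : ZMod n) : wt n u = min ((u - 1).val) (n - (u - 1).val) := by
  by_cases h : u = 1
  · subst h; simp [wt]
  · unfold wt
    rw [show (1 : ZMod n) - u = -(u - 1) by ring, ZMod.neg_val,
      if_neg (sub_ne_zero.mpr h)]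

lemma wt_le (v : ZMod n) : wt n v ≤ n - 1 := by
  have h := ZMod.val_lt (v - 1)
  have := Nat.min_le_left ((v - 1).val) ((1 - v).val)
  unfold wt
  omega

lemma val_sub_one {x : ZMod n} (hx : x ≠ 0) : (x - 1).val = x.val - 1 := by
  have h1 : 1 ≤ x.val := Nat.one_le_iff_ne_zero.mpr (fun h => hx ((ZMod.val_eq_zero x).mp h))
  have h2 : x - 1 = ((x.val - 1 : ℕ) : ZMod n) := by
    rw [Nat.cast_sub h1, ZMod.natCast_rightInverse x]; simp
  rw [h2, ZMod.val_cast_of_lt (by have := ZMod.val_lt x; omega)]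

/-- any vertex of the cycle other than `1` has a neighbor strictly closer to `1`. -/
lemma wt_step (hn : 3 ≤ n) (v : ZMod n) :
    ∃ u : ZMod n, (u = v + 1 ∨ u = v - 1) ∧ (v ≠ 1 → wt n u + 1 = wt n v) := by
  by_cases hv : v = 1
  · exact ⟨v + 1, Or.inl rfl, fun h => absurd hv h⟩
  set a := (v - 1).val with ha
  have hane : v - 1 ≠ 0 := sub_ne_zero.mpr hv
  have ha1 : 1 ≤ a := Nat.one_le_iff_ne_zero.mpr (fun h => hane ((ZMod.val_eq_zero _).mp h))
  have haln : a < n := ZMod.val_lt _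
  have hwv : wt n v = min a (n - a) := wt_formula v
  by_cases hcase : a ≤ n - a
  · refine ⟨v - 1, Or.inr rfl, fun _ => ?_⟩
    have hc : (v - 1 - 1).val = a - 1 := val_sub_one hane
    rw [wt_formula (v - 1), hc, hwv, Nat.min_eq_left (by omega), Nat.min_eq_left hcase]
    omega
  · refine ⟨v + 1, Or.inl rfl, fun _ => ?_⟩
    by_cases hv0 : v = 0
    · subst hv0
      have h1 : wt n (0 + 1) = 0 := wt_eq_zero.mpr (by rw [zero_add])
      have h2 : a = n - 1 := by
        have hcast : ((n - 1 : ℕ) : ZMod n) = 0 - 1 := by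
          rw [Nat.cast_sub (by omega : 1 ≤ n), ZMod.natCast_self]
          push_cast
          ring
        rw [ha, ← hcast, ZMod.val_cast_of_lt (by omega)]
      rw [h1, hwv, h2, Nat.min_eq_right (by omega)]
      omega
    · have hvv : v.val - 1 = a := by rw [ha, val_sub_one hv0]
      have hv1 : 1 ≤ v.val := Nat.one_le_iff_ne_zero.mpr
        (fun h => hv0 ((ZMod.val_eq_zero _).mp h))
      have hvlt : v.val < n := ZMod.val_lt v
      have hc : (v + 1 - 1).val = a + 1 := by
        rw [add_sub_cancel_right]; omega
      rw [wt_formula (v + 1), hc, hwv, Nat.min_eq_right (by omega), Nat.min_eq_right (by omega)]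
      omega

lemma adj_update (hn : 3 ≤ n) (x : Fin d → ZMod n) (i : Fin d) {e : ZMod n}
    (he : e = 1 ∨ e = -1) : (torus n d).Adj x (Function.update x i (x i + e)) := by
  have h1 : (1 : ZMod n) ≠ 0 := one_ne_zero' hn
  have hene : e ≠ 0 := by rcases he with rfl | rfl
                          · exact h1
                          · exact neg_ne_zero.mpr h1
  have hne : x i + e ≠ x i := fun h => hene (by rwa [add_eq_left] at h)
  rw [torus, SimpleGraph.fromRel_adj]
  refine ⟨fun h => hne ?_, Or.inl ⟨i, ?_, fun j hj => Function.update_of_ne hj _ _⟩⟩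
  · have := congrFun h i
    rw [Function.update_self] at this
    exact this.symm
  · rcases he with rfl | rfl
    · left; rw [Function.update_self]
    · right; rw [Function.update_self, sub_eq_add_neg]

open Finset

lemma mem_dynSet_iff {x : Fin d → ZMod n} :
    x ∈ dynSet n d r ↔ d - r + 1 ≤ (univ.filter (fun j => x j = 1)).card := by
  classical
  constructor
  · rintro ⟨k, hk, hmem⟩
    calc d - r + 1 = k.card := hk.symm
    _ ≤ _ := Finset.card_le_card fun j hj => by
        simp only [mem_filter, mem_univ, true_and]; exact hmem j hj
  · intro h
    obtain ⟨t, hts, htc⟩ := Finset.exists_subset_card_eq h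
    exact ⟨t, htc, fun j hj => (mem_filter.mp (hts hj)).2⟩

lemma nondyn_card {x : Fin d → ZMod n} (hx : x ∉ dynSet n d r) (hrd : r ≤ d) :
    r ≤ (univ.filter (fun j => ¬ x j = 1)).card := by
  classical
  have h1 := Finset.card_filter_add_card_filter_not
    (s := (univ : Finset (Fin d))) (p := fun j => x j = 1)
  have h2 : ¬ (d - r + 1 ≤ (univ.filter (fun j => x j = 1)).card) :=
    fun h => hx (mem_dynSet_iff.mpr h)
  rw [Finset.card_univ, Fintype.card_fin] at h1
  omega

lemma sig_update (x : Fin d → ZMod n) (j : Fin d) (v : ZMod n) :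
    sig n d (Function.update x j v) + wt n (x j) = sig n d x + wt n v := by
  classical
  unfold sig
  have hupd : (fun k => wt n (Function.update x j v k)) =
      Function.update (fun k => wt n (x k)) j (wt n v) := by
    funext k
    by_cases h : k = j
    · subst h; rw [Function.update_self, Function.update_self]
    · rw [Function.update_of_ne h, Function.update_of_ne h]
  have h1 : ∑ k, wt n (Function.update x j v k)
      = wt n v + ∑ k ∈ univ \ {j}, wt n (x k) := by
    rw [show (∑ k, wt n (Function.update x j v k))
        = ∑ k, (fun k => wt n (Function.update x j v k)) k from rfl, hupd]
    exact Finset.sum_update_of_mem (Finset.mem_univ j) _ _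
  have h2 : ∑ k, wt n (x k) = wt n (x j) + ∑ k ∈ univ \ {j}, wt n (x k) := by
    rw [← Finset.sum_update_of_mem (Finset.mem_univ j)]
    congr 1
    funext k
    by_cases h : k = j
    · subst h; rw [Function.update_self]
    · rw [Function.update_of_ne h]
  omega

/-- A vertex of `dynSet` has at least `r` neighbors inside `dynSet`. -/
lemma dynSet_nbrs (hn : 3 ≤ n) (hr2 : 2 ≤ r) (hrd : r ≤ d)
    {x : Fin d → ZMod n} (hx : x ∈ dynSet n d r) :
    r ≤ ((torus n d).neighborSet x ∩ dynSet n d r).ncard := by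
  classical
  set Z : Finset (Fin d) := univ.filter (fun j => x j = 1) with hZdef
  have hZ : d - r + 1 ≤ Z.card := mem_dynSet_iff.mp hx
  obtain ⟨C, hCcard, hC⟩ : ∃ C : Finset (Fin d), r - 1 ≤ C.card ∧
      ∀ j ∈ C, ∀ v : ZMod n, Function.update x j v ∈ dynSet n d r := by
    by_cases hbig : d - r + 2 ≤ Z.card
    · refine ⟨univ, by rw [Finset.card_univ, Fintype.card_fin]; omega,
        fun j _ v => mem_dynSet_iff.mpr ?_⟩
      have hsub : Z.erase j ⊆ univ.filter (fun i => Function.update x j v i = 1) := by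
        intro i hi
        obtain ⟨hij, hiZ⟩ := Finset.mem_erase.mp hi
        simp only [mem_filter, mem_univ, true_and]
        rw [Function.update_of_ne hij]
        exact (mem_filter.mp hiZ).2
      have hle := Finset.card_le_card hsub
      have hpred := Finset.pred_card_le_card_erase (s := Z) (a := j)
      omega
    · refine ⟨Zᶜ, ?_, fun j hj v => mem_dynSet_iff.mpr ?_⟩
      · rw [Finset.card_compl]
        simp only [Fintype.card_fin]
        omega
      · have hjZ : j ∉ Z := by simpa using hj
        refine le_trans hZ (Finset.card_le_card ?_)
        intro i hi
        simp only [mem_filter, mem_univ, true_and]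
        rw [Function.update_of_ne (fun h => hjZ (by rw [← h]; exact hi))]
        exact (mem_filter.mp hi).2
  set f1 : Fin d → (Fin d → ZMod n) := fun j => Function.update x j (x j + 1) with hf1
  set f2 : Fin d → (Fin d → ZMod n) := fun j => Function.update x j (x j + (-1)) with hf2
  have hinj : ∀ (e : ZMod n), e ≠ 0 →
      Set.InjOn (fun j => Function.update x j (x j + e)) C := by
    intro e he j hj j' hj' hEq
    by_contra hne
    have := congrFun hEq j
    simp only at this
    rw [Function.update_self, Function.update_of_ne hne] at this
    exact he (by rwa [add_eq_left] at this)
  have h1 : (1 : ZMod n) ≠ 0 := one_ne_zero' hn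
  have hm1 : (-1 : ZMod n) ≠ 0 := neg_ne_zero.mpr h1
  have hdisj : Disjoint (C.image f1) (C.image f2) := by
    rw [Finset.disjoint_left]
    intro y hy1 hy2
    obtain ⟨j, hj, hj1⟩ := Finset.mem_image.mp hy1
    obtain ⟨j', hj', hj2⟩ := Finset.mem_image.mp hy2
    rw [← hj2] at hj1
    by_cases hjj : j = j'
    · subst hjj
      have := congrFun hj1 j
      rw [hf1, hf2] at this
      simp only at this
      rw [Function.update_self, Function.update_self] at this
      have h2 : (2 : ZMod n) = 0 := by linear_combination this
      exact two_ne_zero' hn h2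
    · have := congrFun hj1 j
      rw [hf1, hf2] at this
      simp only at this
      rw [Function.update_self, Function.update_of_ne hjj] at this
      exact h1 (by rwa [add_eq_left] at this)
  have hcard : 2 * (r - 1) ≤ (C.image f1 ∪ C.image f2).card := by
    rw [Finset.card_union_of_disjoint hdisj,
      Finset.card_image_of_injOn (hinj 1 h1), Finset.card_image_of_injOn (hinj (-1) hm1)]
    omega
  refine le_trans (by omega) (le_trans hcard (card_le_ncard _ ?_))
  intro y hy
  rcases Finset.mem_union.mp hy with hy | hy <;>
    obtain ⟨j, hj, rfl⟩ := Finset.mem_image.mp hy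
  · exact ⟨adj_update hn x j (Or.inl rfl), hC j hj _⟩
  · exact ⟨by simpa [sub_eq_add_neg] using adj_update hn x j (Or.inr rfl), hC j hj _⟩

/-- A vertex not in `dynSet` has `r` neighbors of strictly smaller total weight. -/
lemma nondyn_nbrs (hn : 3 ≤ n) (hrd : r ≤ d) {x : Fin d → ZMod n}
    (hx : x ∉ dynSet n d r) :
    ∃ F : Finset (Fin d → ZMod n), r ≤ F.card ∧
      ∀ y ∈ F, (torus n d).Adj x y ∧ sig n d y + 1 = sig n d x := by
  classical
  choose g hg1 hg2 using fun j => wt_step hn (x j)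
  have h1 : (1 : ZMod n) ≠ 0 := one_ne_zero' hn
  have hgne : ∀ j, g j ≠ x j := by
    intro j h
    rcases hg1 j with hg | hg
    · rw [h] at hg
      exact h1 (by rwa [left_eq_add] at hg)
    · rw [h] at hg
      apply neg_ne_zero.mpr h1
      rw [sub_eq_add_neg] at hg
      rwa [left_eq_add] at hg
  set N := univ.filter (fun j => ¬ x j = 1) with hN
  refine ⟨N.image (fun j => Function.update x j (g j)), ?_, ?_⟩
  · rw [Finset.card_image_of_injOn]
    · exact nondyn_card hx hrd
    · intro j hj j' hj' hEq
      by_contra hne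
      have := congrFun hEq j
      simp only at this
      rw [Function.update_self, Function.update_of_ne hne] at this
      exact hgne j this
  · intro y hy
    obtain ⟨j, hj, rfl⟩ := Finset.mem_image.mp hy
    have hj1 : ¬ x j = 1 := (mem_filter.mp hj).2
    constructor
    · rcases hg1 j with hg | hg
      · rw [hg]; exact adj_update hn x j (Or.inl rfl)
      · rw [hg, sub_eq_add_neg]; exact adj_update hn x j (Or.inr rfl)
    · have hw := hg2 j hj1
      have hs := sig_update x j (g j)
      omega

lemma sig_small_dyn (hrd : r ≤ d) {x : Fin d → ZMod n}
    (h : sig n d x + 1 ≤ r) : x ∈ dynSet n d r := by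
  classical
  by_contra hx
  have hN := nondyn_card hx hrd
  set N := univ.filter (fun j => ¬ x j = 1) with hNdef
  have hcard : N.card ≤ sig n d x := by
    calc N.card = ∑ _j ∈ N, 1 := by simp
    _ ≤ ∑ j ∈ N, wt n (x j) := Finset.sum_le_sum (by
        intro j hj
        have hj1 : ¬ x j = 1 := (mem_filter.mp hj).2
        have : wt n (x j) ≠ 0 := fun hz => hj1 (wt_eq_zero.mp hz)
        omega)
    _ ≤ sig n d x := Finset.sum_le_sum_of_subset (Finset.subset_univ N)
  omega

end WithInstances
end Stmt10

open Stmt10 in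
/-- For `d ≥ 2`, `2 ≤ r ≤ d` and `n ≥ 3`, the configuration on `T_n^d`
whose active vertices are exactly `D(r)` is a monotone dynamo for reversible r-BP. -/
theorem stmt_10 (n d r : ℕ) (hn : 3 ≤ n) (hd : 2 ≤ d) (hr2 : 2 ≤ r) (hrd : r ≤ d) :
    revMonotoneDynamo (torus n d) r (dynSet n d r) := by
  haveI : NeZero n := ⟨by omega⟩
  classical
  set G := torus n d with hG
  set A := dynSet n d r with hA
  set C : ℕ → Set (Fin d → ZMod n) := fun t => A ∪ {x | sig n d x + 1 ≤ t + r} with hC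
  have hmono : ∀ {S T : Set (Fin d → ZMod n)}, S ⊆ T → revStep G r S ⊆ revStep G r T := by
    intro S T h v hv
    exact le_trans hv
      (Set.ncard_le_ncard (Set.inter_subset_inter_right _ h) (Set.toFinite _))
  have hCsucc : ∀ t, C (t + 1) ⊆ revStep G r (C t) := by
    intro t x hx
    by_cases hxA : x ∈ A
    · show r ≤ (G.neighborSet x ∩ C t).ncard
      exact le_trans (dynSet_nbrs hn hr2 hrd hxA)
        (Set.ncard_le_ncard (Set.inter_subset_inter_right _ Set.subset_union_left)
          (Set.toFinite _))
    · have hs : sig n d x + 1 ≤ t + 1 + r := by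
        rcases hx with h | h
        · exact absurd h hxA
        · exact h
      obtain ⟨F, hFc, hF⟩ := nondyn_nbrs hn hrd hxA
      show r ≤ (G.neighborSet x ∩ C t).ncard
      refine le_trans hFc (card_le_ncard F ?_)
      intro y hy
      obtain ⟨hadj, hsig⟩ := hF y hy
      exact ⟨hadj, Or.inr (by simp only [Set.mem_setOf_eq]; omega)⟩
  have hC0 : C 0 = A := by
    apply Set.Subset.antisymm
    · rintro x (h | h)
      · exact h
      · exact sig_small_dyn hrd (by simpa using h)
    · exact Set.subset_union_left
  have hAstep : A ⊆ revStep G r A := fun x hx => dynSet_nbrs hn hr2 hrd hx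
  have hseq : ∀ t, (revStep G r)^[t] A ⊆ (revStep G r)^[t + 1] A := by
    intro t
    induction t with
    | zero => simpa using hAstep
    | succ t ih =>
        rw [Function.iterate_succ_apply', Function.iterate_succ_apply']
        exact hmono ih
  have hmonot : Monotone (fun t => (revStep G r)^[t] A) := monotone_nat_of_le_succ hseq
  have hCle : ∀ t, C t ⊆ (revStep G r)^[t] A := by
    intro t
    induction t with
    | zero => rw [Function.iterate_zero_apply, hC0]
    | succ t ih =>
        rw [Function.iterate_succ_apply']
        exact (hCsucc t).trans (hmono ih)
  have hfull : (revStep G r)^[d * n] A = Set.univ := by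
    apply Set.eq_univ_of_univ_subset
    intro x _
    apply hCle (d * n)
    right
    show sig n d x + 1 ≤ d * n + r
    have hsb : sig n d x ≤ d * (n - 1) := by
      calc sig n d x ≤ ∑ _j : Fin d, (n - 1) := Finset.sum_le_sum (fun j _ => wt_le _)
      _ = d * (n - 1) := by
          rw [Finset.sum_const, Finset.card_univ, Fintype.card_fin, smul_eq_mul]
    have hdn : d * (n - 1) + d = d * n := by
      have h1 : n - 1 + 1 = n := by omega
      calc d * (n - 1) + d = d * (n - 1 + 1) := by ring
      _ = d * n := by rw [h1]
    omega
  refine ⟨⟨d * n, fun t' ht' => ?_⟩, hseq⟩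
  apply Set.eq_univ_of_univ_subset
  rw [← hfull]
  exact hmonot ht'
end

section
/- Let r be even with d+1 ≤ r ≤ 2d, and define f(x) = x_1 + 2x_2 + … + (r/2 − 1)x_{r/2−1} mod (r/2) for x ∈ (Z/n)^d (n divisible by r/2 if needed; assume r/2 divides n), and S = {x : f(x) ∈ {1, 2, …, r−d}}. Then in the torus T_n^d, every vertex of S has exactly r neighbors in S, and every vertex not in S has exactly 2(r−d) neighbors in S. -/
/-- The functional `f(x) = x_1 + 2 x_2 + ⋯ + (r/2 - 1) x_{r/2-1} mod (r/2)` (coordinates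
indexed from 1; the coordinate with 1-based index `i + 1` gets coefficient `i + 1` when
`i + 1 ≤ r/2 - 1`, and coefficient `0` otherwise), well-defined since `r/2 ∣ n`. -/
def fEven (n d r : ℕ) (h : r / 2 ∣ n) (x : Fin d → ZMod n) : ZMod (r / 2) :=
  ∑ i : Fin d, if (i : ℕ) + 1 ≤ r / 2 - 1 then
    (((i : ℕ) + 1 : ℕ) : ZMod (r / 2)) * ZMod.castHom h (ZMod (r / 2)) (x i) else 0

/-! The neighbours of `x` in the torus are the `2d` points `x ± eᵢ`, pairwise distinct since
`n ≥ 3`, and `f(x ± eᵢ) = f(x) ± cᵢ` with `cᵢ = i` for `i < r/2` and `cᵢ = 0` otherwise. For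
either sign, `i ↦ f(x) ± cᵢ` takes every residue other than `f(x)` exactly once and the value
`f(x)` exactly `d - (r/2 - 1)` times. With `S = f⁻¹(A)`, `|A| = r - d`, a vertex `x` therefore has
`2 (|A \ {f x}| + [f x ∈ A] (d - r/2 + 1))` neighbours in `S`: that is `r` if `x ∈ S` and
`2 (r - d)` otherwise. -/

open Finset

lemma Pi.eq_add_single_iff {ι M : Type*} [DecidableEq ι] [AddGroup M] {x y : ι → M} {i : ι}
    {a : M} : y = x + Pi.single i a ↔ y i = x i + a ∧ ∀ j ≠ i, y j = x j := by
  refine ⟨by rintro rfl; simp +contextual, fun ⟨hi, hj⟩ ↦ funext fun j ↦ ?_⟩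
  by_cases hji : j = i
  · subst hji; simpa using hi
  · simpa [hji] using hj j hji

lemma Int.cast_unit_ne_zero {R : Type*} [Ring R] [Nontrivial R] (u : ℤˣ) : ((u : ℤ) : R) ≠ 0 :=
  (u.isUnit.map (Int.castRingHom R)).ne_zero

lemma ZMod.natCast_injOn_Icc_one (m : ℕ) : Set.InjOn (Nat.cast : ℕ → ZMod m) (Set.Icc 1 m) := by
  rintro a ⟨ha, ham⟩ b ⟨hb, hbm⟩ hab
  obtain ⟨a, rfl⟩ := Nat.exists_eq_add_of_le' ha
  obtain ⟨b, rfl⟩ := Nat.exists_eq_add_of_le' hb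
  rw [Nat.cast_succ, Nat.cast_succ, add_left_inj, ZMod.natCast_eq_natCast_iff',
    Nat.mod_eq_of_lt (by omega), Nat.mod_eq_of_lt (by omega)] at hab
  rw [hab]

section Torus

variable {n d : ℕ}

lemma torus_adj_iff (hn : 1 < n) {x y : Fin d → ZMod n} :
    (torus n d).Adj x y ↔ ∃ i, ∃ u : ℤˣ, y = x + Pi.single i ((u : ℤ) : ZMod n) := by
  have : Fact (1 < n) := ⟨hn⟩
  have rel_iff : ∀ x y : Fin d → ZMod n,
      (∃ i, (y i = x i + 1 ∨ y i = x i - 1) ∧ ∀ j, j ≠ i → y j = x j) ↔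
        ∃ i, ∃ u : ℤˣ, y = x + Pi.single i ((u : ℤ) : ZMod n) := by
    intro x y
    simp only [Pi.eq_add_single_iff]
    refine exists_congr fun i ↦ ⟨fun ⟨hi, hj⟩ ↦ ?_, fun ⟨u, hi, hj⟩ ↦ ⟨?_, hj⟩⟩
    · rcases hi with hi | hi
      · exact ⟨1, by simpa using hi, hj⟩
      · exact ⟨-1, by simpa [sub_eq_add_neg] using hi, hj⟩
    · rcases Int.units_eq_one_or u with rfl | rfl
      · simpa using Or.inl hi
      · simpa [sub_eq_add_neg] using Or.inr hi
  simp only [torus, SimpleGraph.fromRel_adj, rel_iff]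
  constructor
  · rintro ⟨-, h | ⟨i, u, rfl⟩⟩
    · exact h
    · refine ⟨i, -u, ?_⟩
      rw [add_assoc, Units.val_neg, Int.cast_neg, ← Pi.single_add, add_neg_cancel, Pi.single_zero,
        add_zero]
  · rintro ⟨i, u, rfl⟩
    exact ⟨by simpa using Int.cast_unit_ne_zero u, Or.inl ⟨i, u, rfl⟩⟩

lemma torus_neighbor_injective (hn : 2 < n) (x : Fin d → ZMod n) :
    Function.Injective fun p : Fin d × ℤˣ ↦ x + Pi.single p.1 ((p.2 : ℤ) : ZMod n) := by
  have : Fact (1 < n) := ⟨by omega⟩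
  have : Fact (2 < n) := ⟨hn⟩
  rintro ⟨i, u⟩ ⟨j, v⟩ huv
  have hsingle := congrFun (add_left_cancel huv) i
  obtain rfl : i = j := by
    by_contra hij
    simp [Ne.symm hij] at hsingle
    exact Int.cast_unit_ne_zero u hsingle
  rcases Int.units_eq_one_or u with rfl | rfl <;> rcases Int.units_eq_one_or v with rfl | rfl <;>
    simp_all [ZMod.neg_one_ne_one, ZMod.neg_one_ne_one.symm]

lemma ncard_torus_neighborSet_inter (hn : 2 < n) (x : Fin d → ZMod n) (S : Set (Fin d → ZMod n))
    [DecidablePred (· ∈ S)] :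
    ((torus n d).neighborSet x ∩ S).ncard =
      #{p : Fin d × ℤˣ | x + Pi.single p.1 ((p.2 : ℤ) : ZMod n) ∈ S} := by
  have hrange : (torus n d).neighborSet x =
      Set.range fun p : Fin d × ℤˣ ↦ x + Pi.single p.1 ((p.2 : ℤ) : ZMod n) := by
    ext y
    simp [torus_adj_iff (by omega : 1 < n), eq_comm]
  rw [hrange, Set.inter_comm, ← Set.image_preimage_eq_inter_range,
    Set.ncard_image_of_injective _ (torus_neighbor_injective hn x), ← Set.ncard_coe_finset]
  congr
  ext
  simp

end Torus

def fEvenCoeff (m : ℕ) {d : ℕ} (i : Fin d) : ZMod m :=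
  if (i : ℕ) + 1 ≤ m - 1 then (((i : ℕ) + 1 : ℕ) : ZMod m) else 0

section Coeff

variable {m d : ℕ} [NeZero m]

lemma card_fEvenCoeff_eq (hmd : m - 1 ≤ d) (z : ZMod m) :
    #{i : Fin d | fEvenCoeff m i = z} = if z = 0 then d - (m - 1) else 1 := by
  split_ifs with hz
  · subst hz
    have hzero : ∀ i : Fin d, fEvenCoeff m i = 0 ↔ ¬ (i : ℕ) < m - 1 := by
      intro i
      by_cases hi : (i : ℕ) < m - 1
      · simp only [fEvenCoeff, if_pos (by omega : (i : ℕ) + 1 ≤ m - 1), hi, not_true_eq_false,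
          iff_false]
        rw [← ZMod.val_eq_zero, ZMod.val_cast_of_lt (by omega)]
        omega
      · simp [fEvenCoeff, hi]
    simp_rw [hzero, filter_not, card_sdiff_of_subset (filter_subset _ _), Fin.card_filter_val_lt,
      card_univ, Fintype.card_fin]
    omega
  · have hzpos : z.val ≠ 0 := by rwa [Ne, ZMod.val_eq_zero]
    have hzlt := z.val_lt
    have hiff : ∀ i : Fin d, fEvenCoeff m i = z ↔ (i : ℕ) = z.val - 1 := by
      intro i
      rw [fEvenCoeff]
      split_ifs with hi
      · rw [← (ZMod.val_injective m).eq_iff, ZMod.val_cast_of_lt (by omega)]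
        omega
      · exact iff_of_false (Ne.symm hz) (by omega)
    rw [card_eq_one]
    refine ⟨⟨z.val - 1, by omega⟩, ?_⟩
    ext i
    simp [hiff, Fin.ext_iff]

lemma card_add_fEvenCoeff_mul_mem (hmd : m - 1 ≤ d) (c : ZMod m) {ε : ZMod m} (hε : IsUnit ε)
    (A : Finset (ZMod m)) :
    #{i : Fin d | c + fEvenCoeff m i * ε ∈ A} =
      #(A.erase c) + if c ∈ A then d - (m - 1) else 0 := by
  obtain ⟨ε, rfl⟩ := hε
  rw [card_eq_sum_card_fiberwise (f := fun i ↦ c + fEvenCoeff m i * ε)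
    (s := {i : Fin d | c + fEvenCoeff m i * ε ∈ A}) (t := A) fun i hi ↦ (mem_filter.1 hi).2]
  have hfiber : ∀ a ∈ A, #{i ∈ {i : Fin d | c + fEvenCoeff m i * ε ∈ A} |
      c + fEvenCoeff m i * ε = a} = if a = c then d - (m - 1) else 1 := by
    intro a ha
    have hiff : ∀ i : Fin d, c + fEvenCoeff m i * ε = a ↔ fEvenCoeff m i = (a - c) * ↑ε⁻¹ := by
      intro i
      rw [Units.eq_mul_inv_iff_mul_eq, eq_sub_iff_add_eq, add_comm]
    rw [filter_filter, filter_congr fun i _ ↦ and_iff_right_of_imp fun h ↦ h ▸ ha]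
    simp_rw [hiff, card_fEvenCoeff_eq hmd, Units.mul_left_eq_zero, sub_eq_zero]
  rw [sum_congr rfl hfiber, sum_ite, sum_const, sum_const, filter_eq', filter_ne', smul_eq_mul,
    smul_eq_mul, mul_one]
  split_ifs <;> simp [add_comm]

end Coeff

section FEven

variable {n d r : ℕ} (h : r / 2 ∣ n)

lemma fEven_eq_sum (x : Fin d → ZMod n) :
    fEven n d r h x = ∑ i, fEvenCoeff (r / 2) i * ZMod.castHom h (ZMod (r / 2)) (x i) := by
  simp only [fEven, fEvenCoeff, ite_mul, zero_mul]

lemma fEven_add_single (x : Fin d → ZMod n) (i : Fin d) (a : ZMod n) :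
    fEven n d r h (x + Pi.single i a) =
      fEven n d r h x + fEvenCoeff (r / 2) i * ZMod.castHom h (ZMod (r / 2)) a := by
  simp only [fEven_eq_sum, Pi.add_apply, map_add, mul_add, sum_add_distrib, add_right_inj]
  rw [Fintype.sum_eq_single i fun j hj ↦ by simp [hj]]
  simp

lemma ncard_torus_neighborSet_inter_fEven_preimage [NeZero (r / 2)] (hn : 2 < n)
    (hrd : r / 2 - 1 ≤ d) (A : Finset (ZMod (r / 2))) (x : Fin d → ZMod n) :
    ((torus n d).neighborSet x ∩ {y | fEven n d r h y ∈ A}).ncard =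
      2 * (#(A.erase (fEven n d r h x)) + if fEven n d r h x ∈ A then d - (r / 2 - 1) else 0) := by
  rw [ncard_torus_neighborSet_inter hn, card_filter, Fintype.sum_prod_type_right]
  simp only [Set.mem_ofPred_eq, fEven_add_single, map_intCast, ← card_filter]
  rw [sum_congr rfl fun u _ ↦ card_add_fEvenCoeff_mul_mem hrd _
    (u.isUnit.map (Int.castRingHom (ZMod (r / 2)))) A]
  simp

end FEven

/-- For even `r` with `d + 1 ≤ r ≤ 2d` and `r/2 ∣ n`, let
`S = {x : f(x) ∈ {1, …, r - d}}`. Then every vertex of `S` has exactly `r` neighbors in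
`S`, and every vertex not in `S` has exactly `2(r - d)` neighbors in `S`. -/
theorem stmt_14 (n d r : ℕ) (hn : 3 ≤ n) (hrEven : Even r)
    (hrd : d + 1 ≤ r) (hr2d : r ≤ 2 * d) (h : r / 2 ∣ n) :
    ∀ S : Set (Fin d → ZMod n),
      S = {x | ∃ m : ℕ, 1 ≤ m ∧ m ≤ r - d ∧ fEven n d r h x = (m : ZMod (r / 2))} →
      (∀ x ∈ S, ((torus n d).neighborSet x ∩ S).ncard = r) ∧
        (∀ x ∉ S, ((torus n d).neighborSet x ∩ S).ncard = 2 * (r - d)) := by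
  rintro S rfl
  have hr : r / 2 * 2 = r := Nat.div_mul_cancel hrEven.two_dvd
  have : NeZero (r / 2) := ⟨by omega⟩
  set A : Finset (ZMod (r / 2)) := (Icc 1 (r - d)).image Nat.cast
  have hS : {x | ∃ m : ℕ, 1 ≤ m ∧ m ≤ r - d ∧ fEven n d r h x = (m : ZMod (r / 2))} =
      {x | fEven n d r h x ∈ A} := by
    ext x
    simp [A, and_assoc, eq_comm]
  have hA : #A = r - d := by
    rw [card_image_of_injOn, Nat.card_Icc, Nat.add_sub_cancel]
    exact (ZMod.natCast_injOn_Icc_one _).mono fun k hk ↦ by simp at hk ⊢; omega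
  have hcount := ncard_torus_neighborSet_inter_fEven_preimage h (by omega : 2 < n)
    (by omega : r / 2 - 1 ≤ d) A
  simp only [hS, Set.mem_ofPred_eq]
  refine ⟨fun x hx ↦ ?_, fun x hx ↦ ?_⟩
  · rw [hcount, card_erase_of_mem hx, hA, if_pos hx]
    omega
  · rw [hcount, erase_eq_of_notMem hx, hA, if_neg hx]
    omega
end

section
/- Let d be even, n divisible by (d+2)/2, and define on the torus T_n^d the set S = {x ∈ (Z/n)^d : x_1 + 2x_2 + … + (d/2)x_{d/2} ≡ 1 mod (d+2)/2}. Then every vertex of S has exactly d neighbors in S, and every vertex not in S has exactly 2 neighbors in S. -/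
/-- The functional `f(x) = x_1 + 2 x_2 + ⋯ + (d/2) x_{d/2} mod (d+2)/2` (the coordinate
with 1-based index `i + 1` gets coefficient `i + 1` when `i + 1 ≤ d/2`, and coefficient
`0` otherwise), well-defined since `(d+2)/2 ∣ n`. -/
def fMaj (n d : ℕ) (h : (d + 2) / 2 ∣ n) (x : Fin d → ZMod n) : ZMod ((d + 2) / 2) :=
  ∑ i : Fin d, if (i : ℕ) + 1 ≤ d / 2 then
    (((i : ℕ) + 1 : ℕ) : ZMod ((d + 2) / 2)) * ZMod.castHom h (ZMod ((d + 2) / 2)) (x i)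
  else 0


def eps (n : ℕ) (b : Bool) : ZMod n := if b then 1 else -1

def theta (n d : ℕ) (x : Fin d → ZMod n) (p : Fin d × Bool) : Fin d → ZMod n :=
  Function.update x p.1 (x p.1 + eps n p.2)

def coefF (d : ℕ) (i : Fin d) : ZMod ((d + 2) / 2) :=
  if (i : ℕ) + 1 ≤ d / 2 then (((i : ℕ) + 1 : ℕ) : ZMod ((d + 2) / 2)) else 0

lemma eps_ne_zero (n : ℕ) (hn : 3 ≤ n) (b : Bool) : eps n b ≠ 0 := by
  haveI : Fact (1 < n) := ⟨by omega⟩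
  cases b <;> simp [eps]

lemma theta_injective (n d : ℕ) (hn : 3 ≤ n) (x : Fin d → ZMod n) :
    Function.Injective (theta n d x) := by
  haveI : NeZero n := ⟨by omega⟩
  rintro ⟨i, b⟩ ⟨i', b'⟩ hp
  by_cases hii : i = i'
  · subst hii
    have := congrFun hp i
    simp only [theta, Function.update_self] at this
    have hb : eps n b = eps n b' := by
      exact add_left_cancel this
    by_cases hbb : b = b'
    · simp [hbb]
    · exfalso
      have h1 : (1 : ZMod n) = -1 := by
        cases b <;> cases b'
        · exact absurd rfl hbb
        · simpa [eps] using hb.symm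
        · simpa [eps] using hb
        · exact absurd rfl hbb
      have h2 : (2 : ZMod n) = 0 := by linear_combination h1
      have h3 : ((2 : ℕ) : ZMod n) = 0 := by push_cast; exact h2
      rw [ZMod.natCast_eq_zero_iff] at h3
      have := Nat.le_of_dvd (by norm_num) h3
      omega
  · exfalso
    have := congrFun hp i'
    simp only [theta, Function.update_self, Function.update_of_ne (Ne.symm hii)] at this
    exact eps_ne_zero n hn b' (by linear_combination - this)

lemma adj_iff (n d : ℕ) (hn : 3 ≤ n) (x y : Fin d → ZMod n) :
    (torus n d).Adj x y ↔ ∃ p : Fin d × Bool, y = theta n d x p := by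
  haveI : Fact (1 < n) := ⟨by omega⟩
  constructor
  · rintro ⟨hne, hrel⟩
    have key : ∃ i, (y i = x i + 1 ∨ y i = x i - 1) ∧ ∀ j, j ≠ i → y j = x j := by
      rcases hrel with h1 | h1
      · exact h1
      · obtain ⟨i, hi, hj⟩ := h1
        refine ⟨i, ?_, fun j hji => (hj j hji).symm⟩
        rcases hi with hi | hi
        · right; rw [hi]; ring
        · left; rw [hi]; ring
    obtain ⟨i, hi, hj⟩ := key
    rcases hi with hi | hi
    · exact ⟨(i, true), funext fun j => by
        by_cases hji : j = i
        · subst hji; simpa [theta, eps] using hi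
        · simp [theta, eps, Function.update_of_ne hji, hj j hji]⟩
    · exact ⟨(i, false), funext fun j => by
        by_cases hji : j = i
        · subst hji; simp [theta, eps, sub_eq_add_neg] at hi ⊢; exact hi
        · simp [theta, eps, Function.update_of_ne hji, hj j hji]⟩
  · rintro ⟨⟨i, b⟩, rfl⟩
    constructor
    · intro hxy
      have := congrFun hxy i
      simp only [theta, Function.update_self] at this
      exact eps_ne_zero n hn b (by linear_combination - this)
    · left
      refine ⟨i, ?_, fun j hji => ?_⟩
      · cases b
        · right; simp [theta, eps, sub_eq_add_neg]
        · left; simp [theta, eps]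
      · simp [theta, Function.update_of_ne hji]

lemma fMaj_theta (n d : ℕ) (h : (d + 2) / 2 ∣ n) (x : Fin d → ZMod n) (p : Fin d × Bool) :
    fMaj n d h (theta n d x p) =
      fMaj n d h x + coefF d p.1 * (if p.2 then 1 else -1) := by
  obtain ⟨i, b⟩ := p
  unfold fMaj theta
  have hsum : ∀ j : Fin d,
      (if (j : ℕ) + 1 ≤ d / 2 then
        (((j : ℕ) + 1 : ℕ) : ZMod ((d + 2) / 2)) *
          ZMod.castHom h (ZMod ((d + 2) / 2)) (Function.update x i (x i + eps n b) j)
      else 0)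
      = (if (j : ℕ) + 1 ≤ d / 2 then
          (((j : ℕ) + 1 : ℕ) : ZMod ((d + 2) / 2)) *
            ZMod.castHom h (ZMod ((d + 2) / 2)) (x j) else 0)
        + (if j = i then coefF d i * (ZMod.castHom h (ZMod ((d + 2) / 2)) (eps n b)) else 0) := by
    intro j
    by_cases hji : j = i
    · subst hji
      by_cases hle : (j : ℕ) + 1 ≤ d / 2 <;>
        simp [Function.update_self, coefF, hle, map_add] <;> ring
    · simp [Function.update_of_ne hji, hji]
  rw [Finset.sum_congr rfl fun j _ => hsum j, Finset.sum_add_distrib,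
    Finset.sum_ite_eq' Finset.univ i]
  simp only [Finset.mem_univ, if_pos]
  congr 1
  cases b
  · rw [show eps n false = -1 from rfl, map_neg, map_one]; norm_num
  · rw [show eps n true = 1 from rfl, map_one]; norm_num


lemma even_half (d : ℕ) (hd : Even d) : (d + 2) / 2 = d / 2 + 1 := by
  obtain ⟨k, rfl⟩ := hd; omega

lemma coefF_eq_zero_iff (d : ℕ) (hd : Even d) (i : Fin d) :
    coefF d i = 0 ↔ d / 2 < (i : ℕ) + 1 := by
  have hm := even_half d hd
  haveI : NeZero ((d + 2) / 2) := ⟨by omega⟩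
  constructor
  · intro h0
    by_contra hlt
    push_neg at hlt
    rw [coefF, if_pos hlt, ZMod.natCast_eq_zero_iff] at h0
    have := Nat.le_of_dvd (by omega) h0
    omega
  · intro hlt; rw [coefF, if_neg (by omega)]

lemma coefF_eq_iff (d : ℕ) (hd : Even d) (w : ZMod ((d + 2) / 2)) (hw : w ≠ 0) (i : Fin d) :
    coefF d i = w ↔ (i : ℕ) + 1 = w.val := by
  have hm := even_half d hd
  haveI : NeZero ((d + 2) / 2) := ⟨by omega⟩
  have hvlt : w.val < (d + 2) / 2 := ZMod.val_lt w
  constructor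
  · intro hc
    by_cases hle : (i : ℕ) + 1 ≤ d / 2
    · rw [coefF, if_pos hle] at hc
      have := congrArg ZMod.val hc
      rwa [ZMod.val_cast_of_lt (by omega)] at this
    · rw [coefF, if_neg hle] at hc; exact absurd hc.symm hw
  · intro hv
    have hle : (i : ℕ) + 1 ≤ d / 2 := by omega
    rw [coefF, if_pos hle, hv, ZMod.natCast_rightInverse w]

lemma range_filter_le (k d : ℕ) :
    ((Finset.range d).filter fun i => k ≤ i) = Finset.Ico k d := by
  ext a; simp [Finset.mem_filter, Finset.mem_range, Finset.mem_Ico, and_comm]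

lemma count_key (d : ℕ) (hd : Even d) (v : ZMod ((d + 2) / 2)) :
    (Finset.univ.filter fun p : Fin d × Bool =>
        coefF d p.1 * (if p.2 then 1 else -1) = v).card = if v = 0 then d else 2 := by
  have hm := even_half d hd
  haveI : NeZero ((d + 2) / 2) := ⟨by omega⟩
  by_cases hv : v = 0
  · subst hv
    rw [if_pos rfl]
    have hcong : (Finset.univ.filter fun p : Fin d × Bool =>
        coefF d p.1 * (if p.2 then 1 else -1) = 0)
        = Finset.univ.filter fun p : Fin d × Bool => d / 2 < (p.1 : ℕ) + 1 := by
      apply Finset.filter_congr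
      intro p _
      rw [← coefF_eq_zero_iff d hd p.1]
      rcases hb : p.2 <;> simp [hb, mul_neg_one, neg_eq_zero]
    rw [hcong, show (Finset.univ : Finset (Fin d × Bool))
        = Finset.univ ×ˢ Finset.univ from (Finset.univ_product_univ).symm,
      Finset.filter_product_left (fun i : Fin d => d / 2 < (i : ℕ) + 1), Finset.card_product]
    have hcard : (Finset.univ.filter fun i : Fin d => d / 2 < (i : ℕ) + 1).card = d - d / 2 := by
      have h1 : (Finset.univ.filter fun i : Fin d => d / 2 < (i : ℕ) + 1).card
          = ((Finset.range d).filter fun i => d / 2 < i + 1).card := by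
        rw [Finset.card_filter, Finset.card_filter]
        exact Fin.sum_univ_eq_sum_range (fun i => if d / 2 < i + 1 then 1 else 0) d
      have h2 : ((Finset.range d).filter fun i => d / 2 < i + 1) = Finset.Ico (d / 2) d := by
        ext a; simp only [Finset.mem_filter, Finset.mem_range, Finset.mem_Ico]; omega
      rw [h1, h2, Nat.card_Ico]
    rw [hcard, Finset.card_univ, Fintype.card_bool]
    have h2d : d / 2 * 2 = d := Nat.div_mul_cancel hd.two_dvd
    omega
  · rw [if_neg hv]
    have hv0 : v.val ≠ 0 := fun h0 => hv ((ZMod.val_eq_zero v).mp h0)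
    have hvlt : v.val < (d + 2) / 2 := ZMod.val_lt v
    have hnv : -v ≠ 0 := neg_ne_zero.mpr hv
    have hnv0 : (-v).val ≠ 0 := fun h0 => hnv ((ZMod.val_eq_zero _).mp h0)
    have hnvlt : (-v).val < (d + 2) / 2 := ZMod.val_lt _
    have hcond : ∀ (i : Fin d) (b : Bool), (coefF d i * (if b then 1 else -1) = v) ↔
        ((b = true ∧ (i : ℕ) + 1 = v.val) ∨ (b = false ∧ (i : ℕ) + 1 = (-v).val)) := by
      intro i b
      rcases b with _ | _
      · rw [show (if false then (1 : ZMod ((d + 2) / 2)) else -1) = -1 from rfl, mul_neg_one]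
        rw [show (-(coefF d i) = v) ↔ (coefF d i = -v) from neg_eq_iff_eq_neg,
          coefF_eq_iff d hd _ hnv]
        simp
      · rw [show (if true then (1 : ZMod ((d + 2) / 2)) else -1) = 1 from rfl, mul_one,
          coefF_eq_iff d hd _ hv]
        simp
    set i₁ : Fin d := ⟨v.val - 1, by omega⟩ with hi₁
    set i₂ : Fin d := ⟨(-v).val - 1, by omega⟩ with hi₂
    have hset : (Finset.univ.filter fun p : Fin d × Bool =>
        coefF d p.1 * (if p.2 then 1 else -1) = v) = {(i₁, true), (i₂, false)} := by
      ext ⟨i, b⟩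
      simp only [Finset.mem_filter, Finset.mem_univ, true_and, Finset.mem_insert,
        Finset.mem_singleton, Prod.mk.injEq, hcond i b]
      constructor
      · rintro (⟨rfl, hiv⟩ | ⟨rfl, hiv⟩)
        · exact Or.inl ⟨Fin.ext (by simp [hi₁]; omega), rfl⟩
        · exact Or.inr ⟨Fin.ext (by simp [hi₂]; omega), rfl⟩
      · rintro (⟨rfl, rfl⟩ | ⟨rfl, rfl⟩)
        · exact Or.inl ⟨rfl, by simp [hi₁]; omega⟩
        · exact Or.inr ⟨rfl, by simp [hi₂]; omega⟩
    rw [hset, Finset.card_insert_of_notMem (by simp [Prod.ext_iff]), Finset.card_singleton]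

/-- For even `d` with `(d+2)/2 ∣ n`, let
`S = {x : x_1 + 2x_2 + ⋯ + (d/2) x_{d/2} ≡ 1 mod (d+2)/2}` in `T_n^d`. Then every vertex
of `S` has exactly `d` neighbors in `S`, and every vertex not in `S` has exactly `2`
neighbors in `S`. -/
theorem stmt_15 (n d : ℕ) (hn : 3 ≤ n) (hdEven : Even d)
    (h : (d + 2) / 2 ∣ n) :
    ∀ S : Set (Fin d → ZMod n), S = {x | fMaj n d h x = 1} →
      (∀ x ∈ S, ((torus n d).neighborSet x ∩ S).ncard = d) ∧
        (∀ x ∉ S, ((torus n d).neighborSet x ∩ S).ncard = 2) := by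
  intro S hS
  subst hS
  have key : ∀ x : Fin d → ZMod n,
      ((torus n d).neighborSet x ∩ {y | fMaj n d h y = 1}).ncard
        = if (1 - fMaj n d h x) = 0 then d else 2 := by
    intro x
    have hset : (torus n d).neighborSet x ∩ {y | fMaj n d h y = 1}
        = ↑((Finset.univ.filter fun p : Fin d × Bool =>
              coefF d p.1 * (if p.2 then 1 else -1) = 1 - fMaj n d h x).image (theta n d x)) := by
      ext y
      simp only [Set.mem_inter_iff, SimpleGraph.mem_neighborSet, Set.mem_setOf_eq,
        Finset.coe_image, Set.mem_image, Finset.mem_coe, Finset.mem_filter, Finset.mem_univ,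
        true_and]
      rw [adj_iff n d hn]
      constructor
      · rintro ⟨⟨p, rfl⟩, hf⟩
        rw [fMaj_theta] at hf
        exact ⟨p, by linear_combination hf, rfl⟩
      · rintro ⟨p, hp, rfl⟩
        exact ⟨⟨p, rfl⟩, by rw [fMaj_theta]; linear_combination hp⟩
    rw [hset, Set.ncard_coe_finset,
      Finset.card_image_of_injective _ (theta_injective n d hn x),
      count_key d hdEven]
  constructor
  · intro x hx
    rw [Set.mem_setOf_eq] at hx
    rw [key x, if_pos (by rw [hx]; ring)]
  · intro x hx
    rw [Set.mem_setOf_eq] at hx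
    rw [key x, if_neg fun h0 => hx (by linear_combination - h0)]
end

section
/- Let d be odd, n divisible by d+2, and define on T_n^d the set S = {x ∈ (Z/n)^d : 2x_1 + 4x_2 + … + (d+1)x_{(d+1)/2} mod (d+2) ∈ {1, 2}}. Then every vertex of S has exactly d neighbors in S, and every vertex not in S has exactly 2 neighbors in S. -/
/-- The functional `f(x) = 2x_1 + 4x_2 + ⋯ + (d+1) x_{(d+1)/2} mod (d+2)` (the coordinate
with 1-based index `i + 1` gets coefficient `2(i + 1)` when `i + 1 ≤ (d+1)/2`, and
coefficient `0` otherwise), well-defined since `d + 2 ∣ n`. -/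
def fMajOdd (n d : ℕ) (h : d + 2 ∣ n) (x : Fin d → ZMod n) : ZMod (d + 2) :=
  ∑ i : Fin d, if (i : ℕ) + 1 ≤ (d + 1) / 2 then
    ((2 * ((i : ℕ) + 1) : ℕ) : ZMod (d + 2)) * ZMod.castHom h (ZMod (d + 2)) (x i)
  else 0

/-- The coefficient attached to coordinate `i`. -/
def coefC (d : ℕ) (i : Fin d) : ZMod (d + 2) :=
  if (i : ℕ) + 1 ≤ (d + 1) / 2 then ((2 * ((i : ℕ) + 1) : ℕ) : ZMod (d + 2)) else 0

/-- The change of `fMajOdd` when stepping in direction `p.1` with sign `p.2`. -/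
def deltaF (d : ℕ) (p : Fin d × Bool) : ZMod (d + 2) :=
  (if p.2 then 1 else -1) * coefC d p.1

/-- The step map: `gStep x (i, s)` is `x` with `±1` added to coordinate `i`. -/
def gStep {n d : ℕ} (x : Fin d → ZMod n) (p : Fin d × Bool) : Fin d → ZMod n :=
  Function.update x p.1 (x p.1 + (if p.2 then 1 else -1))

lemma gStep_true {n d : ℕ} (x : Fin d → ZMod n) (i : Fin d) :
    gStep x (i, true) = Function.update x i (x i + 1) := by
  simp [gStep]

lemma gStep_false {n d : ℕ} (x : Fin d → ZMod n) (i : Fin d) :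
    gStep x (i, false) = Function.update x i (x i - 1) := by
  simp [gStep, sub_eq_add_neg]

lemma fMajOdd_update {n d : ℕ} (h : d + 2 ∣ n) (x : Fin d → ZMod n) (i : Fin d)
    (a : ZMod n) :
    fMajOdd n d h (Function.update x i (x i + a)) =
      fMajOdd n d h x + coefC d i * ZMod.castHom h (ZMod (d + 2)) a := by
  have key : ∀ j : Fin d,
      (if (j : ℕ) + 1 ≤ (d + 1) / 2 then
        ((2 * ((j : ℕ) + 1) : ℕ) : ZMod (d + 2)) *
          ZMod.castHom h (ZMod (d + 2)) (Function.update x i (x i + a) j)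
      else 0)
      = (if (j : ℕ) + 1 ≤ (d + 1) / 2 then
          ((2 * ((j : ℕ) + 1) : ℕ) : ZMod (d + 2)) * ZMod.castHom h (ZMod (d + 2)) (x j)
        else 0) + (if j = i then coefC d i * ZMod.castHom h (ZMod (d + 2)) a else 0) := by
    intro j
    rcases eq_or_ne j i with rfl | hj
    · rw [if_pos rfl, Function.update_self, map_add, coefC]
      split
      · ring
      · simp
    · rw [Function.update_of_ne hj, if_neg hj, add_zero]
  unfold fMajOdd
  rw [Finset.sum_congr rfl fun j _ => key j, Finset.sum_add_distrib,
    Finset.sum_ite_eq' Finset.univ i, if_pos (Finset.mem_univ i)]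

lemma fMajOdd_gStep {n d : ℕ} (h : d + 2 ∣ n) (x : Fin d → ZMod n) (p : Fin d × Bool) :
    fMajOdd n d h (gStep x p) = fMajOdd n d h x + deltaF d p := by
  rcases p with ⟨i, s⟩
  cases s
  · rw [gStep_false x i, show x i - 1 = x i + (-1) by ring, fMajOdd_update, deltaF]
    simp only [Bool.false_eq_true, if_false, map_neg, map_one, mul_neg, mul_one, neg_one_mul]
  · rw [gStep_true x i, fMajOdd_update, deltaF]
    simp only [if_true, map_one, mul_one, one_mul]

lemma two_mul_half {d : ℕ} (hd : Odd d) : 2 * ((d + 1) / 2) = d + 1 := by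
  obtain ⟨r, rfl⟩ := hd
  omega

lemma coe_nat_inj {N a b : ℕ} (ha : a < N) (hb : b < N) (hab : (a : ZMod N) = b) :
    a = b := by
  have := (ZMod.natCast_eq_natCast_iff a b N).mp hab
  unfold Nat.ModEq at this
  rwa [Nat.mod_eq_of_lt ha, Nat.mod_eq_of_lt hb] at this

lemma fiber_card {d : ℕ} (hdOdd : Odd d) (t : ZMod (d + 2)) :
    (Finset.univ.filter fun p : Fin d × Bool => deltaF d p = t).card
      = if t = 0 then d - 1 else 1 := by
  classical
  have hd1 : 1 ≤ d := hdOdd.pos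
  have hm2 : 2 * ((d + 1) / 2) = d + 1 := two_mul_half hdOdd
  set m := (d + 1) / 2 with hm
  have hmled : m ≤ d := by omega
  -- delta is zero off the "active" coordinates
  have z0 : ∀ p : Fin d × Bool, ¬((p.1 : ℕ) + 1 ≤ m) → deltaF d p = 0 := by
    intro p hp
    unfold deltaF coefC
    rw [if_neg hp, mul_zero]
  -- cast of the basic coefficient
  have hcoef : ∀ p : Fin d × Bool, ((p.1 : ℕ) + 1 ≤ m) →
      deltaF d p = (if p.2 then 1 else -1) * ((2 * ((p.1 : ℕ) + 1) : ℕ) : ZMod (d + 2)) := by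
    intro p hp
    unfold deltaF coefC
    rw [if_pos hp]
  have hndvd : ∀ k : ℕ, 0 < k → k < d + 2 → ¬ ((k : ZMod (d + 2)) = 0) := by
    intro k hk0 hk2 hk
    rw [ZMod.natCast_eq_zero_iff] at hk
    have := Nat.le_of_dvd hk0 hk
    omega
  have nz : ∀ p : Fin d × Bool, ((p.1 : ℕ) + 1 ≤ m) → deltaF d p ≠ 0 := by
    intro p hp h0
    rw [hcoef p hp] at h0
    have : ((2 * ((p.1 : ℕ) + 1) : ℕ) : ZMod (d + 2)) = 0 := by
      rcases p with ⟨i, s⟩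
      cases s <;> simpa using h0
    exact hndvd _ (by omega) (by omega) this
  have hNodd : (d + 2) % 2 = 1 := by
    obtain ⟨r, rfl⟩ := hdOdd; omega
  have hopp : ∀ a b : ℕ, 0 < a → a + b ≤ 2 * d + 2 → (a + b) % 2 = 0 →
      ¬ ((a : ZMod (d + 2)) = -(b : ZMod (d + 2))) := by
    intro a b ha hab hpar hcast
    have hz : ((a + b : ℕ) : ZMod (d + 2)) = 0 := by
      push_cast
      rw [hcast]; ring
    rw [ZMod.natCast_eq_zero_iff] at hz
    have hle := Nat.le_of_dvd (by omega) hz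
    have hz2 : (d + 2) ∣ (a + b - (d + 2)) := Nat.dvd_sub hz dvd_rfl
    have h0 : a + b - (d + 2) = 0 := by
      rcases Nat.eq_zero_or_pos (a + b - (d + 2)) with h | h
      · exact h
      · exact absurd (Nat.le_of_dvd h hz2) (by omega)
    omega
  have inj : ∀ p q : Fin d × Bool, ((p.1 : ℕ) + 1 ≤ m) → ((q.1 : ℕ) + 1 ≤ m) →
      deltaF d p = deltaF d q → p = q := by
    rintro ⟨i, s⟩ ⟨j, r⟩ hi hj heq
    have hi' : (i : ℕ) + 1 ≤ m := hi
    have hj' : (j : ℕ) + 1 ≤ m := hj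
    rw [hcoef _ hi, hcoef _ hj] at heq
    cases s <;> cases r <;>
      simp only [if_true, Bool.false_eq_true, if_false, one_mul, neg_one_mul, neg_inj] at heq
    · have h2 := coe_nat_inj (N := d + 2) (a := 2 * ((i : ℕ) + 1)) (b := 2 * ((j : ℕ) + 1))
        (by omega) (by omega) heq
      have hij : i = j := Fin.ext (by omega)
      rw [hij]
    · exact absurd heq.symm (hopp _ _ (by omega) (by omega) (by omega))
    · exact absurd heq (hopp _ _ (by omega) (by omega) (by omega))
    · have h2 := coe_nat_inj (N := d + 2) (a := 2 * ((i : ℕ) + 1)) (b := 2 * ((j : ℕ) + 1))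
        (by omega) (by omega) heq
      have hij : i = j := Fin.ext (by omega)
      rw [hij]
  rcases eq_or_ne t 0 with rfl | ht
  · rw [if_pos rfl]
    have hset : (Finset.univ.filter fun p : Fin d × Bool => deltaF d p = 0)
        = Finset.univ.filter fun p : Fin d × Bool => ¬((p.1 : ℕ) + 1 ≤ m) := by
      ext p
      simp only [Finset.mem_filter, Finset.mem_univ, true_and]
      exact ⟨fun h0 hc => nz p hc h0, z0 p⟩
    rw [hset]
    have hprod : (Finset.univ.filter fun p : Fin d × Bool => ¬((p.1 : ℕ) + 1 ≤ m))
        = (Finset.univ.filter fun i : Fin d => ¬((i : ℕ) + 1 ≤ m)) ×ˢ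
            (Finset.univ : Finset Bool) := by
      ext p
      simp [Finset.mem_product]
    rw [hprod, Finset.card_product]
    have hcard1 : (Finset.univ.filter fun i : Fin d => (i : ℕ) + 1 ≤ m) =
        Finset.map ⟨Fin.castLE hmled, Fin.castLE_injective hmled⟩ Finset.univ := by
      ext i
      simp only [Finset.mem_filter, Finset.mem_univ, true_and, Finset.mem_map,
        Function.Embedding.coeFn_mk]
      constructor
      · intro hi
        exact ⟨⟨(i : ℕ), by omega⟩, Fin.ext rfl⟩
      · rintro ⟨j, rfl⟩
        have hjlt := j.isLt
        simp only [Fin.coe_castLE]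
        omega
    have hsplit := Finset.card_filter_add_card_filter_not
      (s := (Finset.univ : Finset (Fin d))) (p := fun i : Fin d => (i : ℕ) + 1 ≤ m)
    rw [hcard1, Finset.card_map] at hsplit
    simp only [Finset.card_univ, Fintype.card_fin, Fintype.card_bool] at hsplit ⊢
    omega
  · rw [if_neg ht]
    set k := t.val with hk
    have hkc : ((k : ℕ) : ZMod (d + 2)) = t := ZMod.natCast_zmod_val t
    have hklt : k < d + 2 := ZMod.val_lt t
    have hkpos : 0 < k := by
      rcases Nat.eq_zero_or_pos k with h0 | h0
      · exfalso; apply ht; rw [← hkc, h0, Nat.cast_zero]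
      · exact h0
    obtain ⟨p₀, hp₀m, hp₀⟩ : ∃ p : Fin d × Bool, ((p.1 : ℕ) + 1 ≤ m) ∧ deltaF d p = t := by
      rcases Nat.even_or_odd k with ⟨c, hc⟩ | hkodd
      · have hc1 : 1 ≤ c := by omega
        have hcm : c ≤ m := by omega
        have hmem : (((⟨c - 1, by omega⟩ : Fin d), true).1 : ℕ) + 1 ≤ m := by
          simp only [Fin.val_mk]; omega
        refine ⟨(⟨c - 1, by omega⟩, true), hmem, ?_⟩
        rw [hcoef _ hmem]
        simp only [if_true, one_mul, Fin.val_mk]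
        rw [show 2 * ((c - 1) + 1) = k by omega, hkc]
      · have hk2 : k % 2 = 1 := Nat.odd_iff.mp hkodd
        set c := (d + 2 - k) / 2 with hcdef
        have hc2 : 2 * c = d + 2 - k := by omega
        have hc1 : 1 ≤ c := by omega
        have hcm : c ≤ m := by omega
        have hmem : (((⟨c - 1, by omega⟩ : Fin d), false).1 : ℕ) + 1 ≤ m := by
          simp only [Fin.val_mk]; omega
        refine ⟨(⟨c - 1, by omega⟩, false), hmem, ?_⟩
        rw [hcoef _ hmem]
        simp only [Bool.false_eq_true, if_false, neg_one_mul, Fin.val_mk]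
        rw [show 2 * ((c - 1) + 1) = d + 2 - k by omega]
        have hcast : ((d + 2 - k : ℕ) : ZMod (d + 2)) = ((d + 2 : ℕ) : ZMod (d + 2)) - k := by
          rw [Nat.cast_sub (le_of_lt hklt)]
        rw [hcast, ZMod.natCast_self, zero_sub, neg_neg, hkc]
    rw [Finset.card_eq_one]
    refine ⟨p₀, ?_⟩
    ext q
    simp only [Finset.mem_filter, Finset.mem_univ, true_and, Finset.mem_singleton]
    constructor
    · intro hq
      have hqm : (q.1 : ℕ) + 1 ≤ m := by
        by_contra hc
        rw [z0 q hc] at hq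
        exact ht hq.symm
      apply inj q p₀ hqm hp₀m
      rw [hq, hp₀]
    · rintro rfl; exact hp₀

lemma one_ne_zero_zmod {n : ℕ} (hn : 3 ≤ n) : (1 : ZMod n) ≠ 0 := by
  have : ((1 : ℕ) : ZMod n) ≠ 0 := by
    rw [Ne, ZMod.natCast_eq_zero_iff]
    intro hdvd
    have := Nat.le_of_dvd one_pos hdvd
    omega
  simpa using this

lemma two_ne_zero_zmod {n : ℕ} (hn : 3 ≤ n) : (2 : ZMod n) ≠ 0 := by
  have : ((2 : ℕ) : ZMod n) ≠ 0 := by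
    rw [Ne, ZMod.natCast_eq_zero_iff]
    intro hdvd
    have := Nat.le_of_dvd (by omega) hdvd
    omega
  simpa using this

lemma gStep_inj {n d : ℕ} (hn : 3 ≤ n) (x : Fin d → ZMod n) :
    Function.Injective (gStep x) := by
  have h1 : ∀ s : Bool, (if s then (1 : ZMod n) else -1) ≠ 0 := by
    intro s
    cases s
    · simpa using neg_ne_zero.mpr (one_ne_zero_zmod hn)
    · simpa using one_ne_zero_zmod hn
  rintro ⟨i, s⟩ ⟨j, r⟩ hpq
  unfold gStep at hpq
  simp only at hpq
  have hij : i = j := by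
    by_contra hij
    have := congrFun hpq i
    rw [Function.update_self, Function.update_of_ne hij] at this
    exact h1 s (by linear_combination this)
  subst hij
  have := congrFun hpq i
  rw [Function.update_self, Function.update_self] at this
  have hsr : (if s then (1 : ZMod n) else -1) = (if r then (1 : ZMod n) else -1) :=
    add_left_cancel this
  have hsr' : s = r := by
    cases s <;> cases r
    · rfl
    · exfalso
      apply two_ne_zero_zmod hn
      simp only [Bool.false_eq_true, if_false, if_true] at hsr
      linear_combination -hsr
    · exfalso
      apply two_ne_zero_zmod hn
      simp only [Bool.false_eq_true, if_false, if_true] at hsr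
      linear_combination hsr
    · rfl
  rw [hsr']

lemma neighborSet_eq {n d : ℕ} (hn : 3 ≤ n) (x : Fin d → ZMod n) :
    (torus n d).neighborSet x = Set.range (gStep x) := by
  ext y
  simp only [SimpleGraph.mem_neighborSet, Set.mem_range, torus, SimpleGraph.fromRel_adj]
  constructor
  · rintro ⟨hne, ⟨i, hi, hj⟩ | ⟨i, hi, hj⟩⟩
    · rcases hi with hi | hi
      · refine ⟨(i, true), ?_⟩
        rw [gStep_true]
        funext j'
        rcases eq_or_ne j' i with rfl | hji
        · rw [Function.update_self, ← hi]
        · rw [Function.update_of_ne hji, ← hj j' hji]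
      · refine ⟨(i, false), ?_⟩
        rw [gStep_false]
        funext j'
        rcases eq_or_ne j' i with rfl | hji
        · rw [Function.update_self, ← hi]
        · rw [Function.update_of_ne hji, ← hj j' hji]
    · rcases hi with hi | hi
      · refine ⟨(i, false), ?_⟩
        rw [gStep_false]
        funext j'
        rcases eq_or_ne j' i with rfl | hji
        · rw [Function.update_self, hi, add_sub_cancel_right]
        · rw [Function.update_of_ne hji, hj j' hji]
      · refine ⟨(i, true), ?_⟩
        rw [gStep_true]
        funext j'
        rcases eq_or_ne j' i with rfl | hji
        · rw [Function.update_self, hi, sub_add_cancel]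
        · rw [Function.update_of_ne hji, hj j' hji]
  · rintro ⟨⟨i, s⟩, rfl⟩
    have hdiff : gStep x (i, s) i ≠ x i := by
      cases s
      · rw [gStep_false, Function.update_self]
        intro hc
        apply one_ne_zero_zmod hn
        linear_combination -hc
      · rw [gStep_true, Function.update_self]
        intro hc
        apply one_ne_zero_zmod hn
        linear_combination hc
    refine ⟨?_, Or.inl ⟨i, ?_, ?_⟩⟩
    · intro hc
      exact hdiff (congrFun hc.symm i)
    · cases s
      · right; rw [gStep_false, Function.update_self]
      · left; rw [gStep_true, Function.update_self]
    · intro j hj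
      cases s
      · rw [gStep_false, Function.update_of_ne hj]
      · rw [gStep_true, Function.update_of_ne hj]

/-- For odd `d` with `d + 2 ∣ n`, let
`S = {x : 2x_1 + 4x_2 + ⋯ + (d+1)x_{(d+1)/2} mod (d+2) ∈ {1, 2}}` in `T_n^d`. Then every
vertex of `S` has exactly `d` neighbors in `S`, and every vertex not in `S` has exactly
`2` neighbors in `S`. -/
theorem stmt_16 (n d : ℕ) (hn : 3 ≤ n) (hdOdd : Odd d) (h : d + 2 ∣ n) :
    ∀ S : Set (Fin d → ZMod n),
      S = {x | fMajOdd n d h x = 1 ∨ fMajOdd n d h x = 2} →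
      (∀ x ∈ S, ((torus n d).neighborSet x ∩ S).ncard = d) ∧
        (∀ x ∉ S, ((torus n d).neighborSet x ∩ S).ncard = 2) := by
  classical
  rintro S rfl
  have hd1 : 1 ≤ d := hdOdd.pos
  have hone : (1 : ZMod (d + 2)) ≠ 0 := one_ne_zero_zmod (by omega)
  have hone2 : (1 : ZMod (d + 2)) ≠ 2 := by
    intro hc
    have h12 : ((1 : ℕ) : ZMod (d + 2)) = ((2 : ℕ) : ZMod (d + 2)) := by push_cast; exact hc
    have := coe_nat_inj (by omega) (by omega) h12
    omega
  have main : ∀ x : Fin d → ZMod n,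
      ((torus n d).neighborSet x ∩
        {y | fMajOdd n d h y = 1 ∨ fMajOdd n d h y = 2}).ncard
      = (Finset.univ.filter fun p : Fin d × Bool =>
          deltaF d p = 1 - fMajOdd n d h x).card
        + (Finset.univ.filter fun p : Fin d × Bool =>
          deltaF d p = 2 - fMajOdd n d h x).card := by
    intro x
    set S : Set (Fin d → ZMod n) := {y | fMajOdd n d h y = 1 ∨ fMajOdd n d h y = 2} with hS
    have himg : (torus n d).neighborSet x ∩ S = gStep x '' (gStep x ⁻¹' S) := by
      rw [neighborSet_eq hn x, Set.image_preimage_eq_inter_range, Set.inter_comm]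
    rw [himg, Set.ncard_image_of_injective _ (gStep_inj hn x)]
    have hpre : gStep x ⁻¹' S = {p : Fin d × Bool |
        deltaF d p = 1 - fMajOdd n d h x ∨ deltaF d p = 2 - fMajOdd n d h x} := by
      ext p
      simp only [Set.mem_preimage, Set.mem_setOf_eq, hS, fMajOdd_gStep h x p]
      constructor
      · rintro (hp | hp)
        · exact Or.inl (by linear_combination hp)
        · exact Or.inr (by linear_combination hp)
      · rintro (hp | hp)
        · exact Or.inl (by linear_combination hp)
        · exact Or.inr (by linear_combination hp)
    rw [hpre, Set.ncard_eq_toFinset_card', Set.toFinset_setOf, Finset.filter_or,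
      Finset.card_union_of_disjoint]
    rw [Finset.disjoint_filter]
    intro p _ h1 h2
    rw [h1] at h2
    exact hone2 (by linear_combination h2)
  constructor
  · intro x hx
    rw [main x]
    rcases hx with hx | hx
    · rw [hx, fiber_card hdOdd, fiber_card hdOdd,
        if_pos (sub_self (1 : ZMod (d + 2))),
        if_neg (sub_ne_zero.mpr (Ne.symm hone2))]
      omega
    · rw [hx, fiber_card hdOdd, fiber_card hdOdd,
        if_pos (sub_self (2 : ZMod (d + 2))),
        if_neg (sub_ne_zero.mpr hone2)]
      omega
  · intro x hx
    rw [Set.mem_setOf_eq, not_or] at hx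
    rw [main x, fiber_card hdOdd, fiber_card hdOdd,
      if_neg (sub_ne_zero.mpr fun hc => hx.1 hc.symm),
      if_neg (sub_ne_zero.mpr fun hc => hx.2 hc.symm)]
end

section
/- Let G be a graph partitioned into inactive part G₀ and active part G₁ (a configuration for the majority process on a 2d-regular graph). If the configuration is a monotone dynamo for the majority process, then G₀ contains no subgraph of minimum degree at least d, and every vertex of G₁ has at most d neighbors in G₀. -/
/-- Let `G` be `2d`-regular, and let `A` be a monotone dynamo for the
majority process, with active part `G₁ = A` and inactive part `G₀ = Aᶜ`. Then `G₀`
contains no subgraph of minimum degree at least `d` (every nonempty subset `S` of `Aᶜ`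
has a vertex with fewer than `d` neighbors in `S`), and every vertex of `G₁` has at most
`d` neighbors in `G₀`. -/
theorem stmt_18 {V : Type*} [Fintype V] (G : SimpleGraph V) (d : ℕ)
    (hreg : ∀ v, (G.neighborSet v).ncard = 2 * d)
    (A : Set V) (hA : majMonotoneDynamo G d A) :
    (∀ S : Set V, S ⊆ Aᶜ → S.Nonempty →
        ∃ v ∈ S, (G.neighborSet v ∩ S).ncard < d) ∧
      (∀ v ∈ A, (G.neighborSet v ∩ Aᶜ).ncard ≤ d) := by
  obtain ⟨⟨t, ht⟩, hmono⟩ := hA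
  have hsplit : ∀ (v : V) (B : Set V),
      (G.neighborSet v ∩ B).ncard + (G.neighborSet v ∩ Bᶜ).ncard = 2 * d := by
    intro v B
    rw [← hreg v, ← Set.diff_eq]
    exact Set.ncard_inter_add_ncard_diff_eq_ncard _ _ (Set.toFinite _)
  constructor
  · intro S hS hSne
    by_contra h
    push_neg at h
    have hind : ∀ n, S ⊆ ((majStep G d)^[n] A)ᶜ := by
      intro n
      induction n with
      | zero => simpa using hS
      | succ n ih =>
        intro v hv
        rw [Function.iterate_succ_apply']
        intro hmem
        have h1 : d ≤ (G.neighborSet v ∩ ((majStep G d)^[n] A)ᶜ).ncard := by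
          refine le_trans (h v hv) (Set.ncard_le_ncard ?_ ?_)
          · exact Set.inter_subset_inter_right _ ih
          · exact (Set.toFinite _).inter_of_left _
        have h2 := hsplit v ((majStep G d)^[n] A)
        have hvnot : v ∉ (majStep G d)^[n] A := ih hv
        rcases hmem with h3 | h3
        · omega
        · exact hvnot h3.2
    obtain ⟨v, hv⟩ := hSne
    have := hind t hv
    rw [ht t le_rfl] at this
    exact this (Set.mem_univ v)
  · intro v hv
    have hstep : A ⊆ majStep G d A := by simpa using hmono 0
    have hv' := hstep hv
    have hle : d ≤ (G.neighborSet v ∩ A).ncard := by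
      rcases hv' with h | h
      · omega
      · exact h.1.ge
    have := hsplit v A
    omega
end
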